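/- arXiv:2410.07450 — 9 statements merged into one kernel-verified Lean document; each statement's English description precedes it below -/
import Mathlib

section
/- Let X be a topological space, let a < b be reals, I = [a,b], and let φ, ψ, ω : X → ℝ and α, β : [a,b] → ℝ be continuous functions. Assume: (i1) there is a dense subset D ⊆ [a,b] such that for each λ ∈ D the function x ↦ α(λ)φ(x) + β(λ)ψ(x) + ω(x) is inf-connected; (i2) α and β are C¹ on (a,b), α'(λ) ≠ 0 for all λ ∈ (a,b), and g := β'/α' is strictly monotone on (a,b); and either (i3) g is increasing on (a,b) and α'(λ)ψ(x) < 0 for all λ ∈ (a,b) and all x ∈ X with ψ(x) ≠ 0, or (i4) g is decreasing on (a,b) and α'(λ)ψ(x) > 0 for all λ ∈ (a,b) and all x ∈ X with ψ(x) ≠ 0. Set γ := inf_{(a,b)} g, δ := sup_{(a,b)} g, and define h : ℝ → [a,b] by h(μ) = g⁻¹(μ) if μ ∈ g((a,b)); h(μ) = a if (μ ≤ γ and (i3) holds) or (μ ≥ δ and (i4) holds); h(μ) = b if (μ ≤ γ and (i4) holds) or (μ ≥ δ and (i3) holds). Then: for every x ∈ X with ψ(x) ≠ 0, Φ(x) =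 α(h(−φ(x)/ψ(x)))φ(x) + β(h(−φ(x)/ψ(x)))ψ(x) + ω(x); for every x ∈ X with ψ(x) = 0, Φ(x) = max{α(a)φ(x), α(b)φ(x)} + ω(x); and inf_{x∈X} Φ(x) = sup_{λ∈[a,b]} inf_{x∈X} (α(λ)φ(x) + β(λ)ψ(x) + ω(x)). -/
/-!
For fixed `x`, the slice `λ ↦ α λ * φ x + β λ * ψ x + ω x` has derivative
`α' λ * ψ x * (g λ + φ x / ψ x)` when `ψ x ≠ 0`. Since `g` is strictly monotone and `α' ψ` has a
fixed sign, this derivative changes sign only at `h (-(φ x / ψ x))`: the slice increases up to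
that point and decreases after it, which gives the value of the envelope. When `ψ x = 0` the
derivative `α' λ * φ x` has constant sign, so the slice is monotone.

In particular every slice is quasiconcave in `λ`, and the minimax equality follows by a
connectedness argument on `[a, b]`. If a level `r` separated `⨆ inf` from `⨅ sup`, the
parameters `λ` at which some point below level `r` rises above `r` at a parameter left of `λ`,
resp. right of `λ`, would form two relatively open sets covering `[a, b]`, containing `b`, resp.
`a`. Hence they meet, and by density they meet at some `λ ∈ D`. Then the connected sublevel set
of level `r` at `λ` is covered by two open sets, so it contains a point that rises above `r` on
both sides of `λ`, contradicting quasiconcavity.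
-/

open Set

def UnimodalOn (F : ℝ → ℝ) (a c b : ℝ) : Prop :=
  MonotoneOn F (Icc a c) ∧ AntitoneOn F (Icc c b)

namespace UnimodalOn

variable {F : ℝ → ℝ} {a b c : ℝ}

theorem isMaxOn (hF : UnimodalOn F a c b) : IsMaxOn F (Icc a b) c := fun l hl => by
  rcases le_total l c with hlc | hcl
  · exact hF.1 ⟨hl.1, hlc⟩ ⟨hl.1.trans hlc, le_rfl⟩ hlc
  · exact hF.2 ⟨le_rfl, hcl.trans hl.2⟩ ⟨hcl, hl.2⟩ hcl

theorem quasiconcaveOn (hF : UnimodalOn F a c b) : QuasiconcaveOn ℝ (Icc a b) F := fun r => by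
  refine convex_iff_ordConnected.2
    ⟨fun p hp s hs q hq => ⟨⟨hp.1.1.trans hq.1, hq.2.trans hs.1.2⟩, ?_⟩⟩
  rcases le_total q c with hqc | hcq
  · exact hp.2.trans (hF.1 ⟨hp.1.1, hq.1.trans hqc⟩ ⟨hp.1.1.trans hq.1, hqc⟩ hq.1)
  · exact hs.2.trans (hF.2 ⟨hcq, hq.2.trans hs.1.2⟩ ⟨hcq.trans hq.2, hs.1.2⟩ hq.2)

end UnimodalOn

theorem monotoneOn_Icc_of_hasDerivAt_nonneg {F F' : ℝ → ℝ} {a b : ℝ}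
    (hF : ContinuousOn F (Icc a b)) (hd : ∀ l ∈ Ioo a b, HasDerivAt F (F' l) l)
    (hF' : ∀ l ∈ Ioo a b, 0 ≤ F' l) : MonotoneOn F (Icc a b) :=
  monotoneOn_of_hasDerivWithinAt_nonneg (convex_Icc a b) hF
    (by simpa only [interior_Icc] using fun l hl => (hd l hl).hasDerivWithinAt)
    (by rwa [interior_Icc])

theorem antitoneOn_Icc_of_hasDerivAt_nonpos {F F' : ℝ → ℝ} {a b : ℝ}
    (hF : ContinuousOn F (Icc a b)) (hd : ∀ l ∈ Ioo a b, HasDerivAt F (F' l) l)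
    (hF' : ∀ l ∈ Ioo a b, F' l ≤ 0) : AntitoneOn F (Icc a b) :=
  antitoneOn_of_hasDerivWithinAt_nonpos (convex_Icc a b) hF
    (by simpa only [interior_Icc] using fun l hl => (hd l hl).hasDerivWithinAt)
    (by rwa [interior_Icc])

theorem unimodalOn_of_hasDerivAt {F F' : ℝ → ℝ} {a b c : ℝ} (hF : ContinuousOn F (Icc a b))
    (hc : c ∈ Icc a b) (hd : ∀ l ∈ Ioo a b, HasDerivAt F (F' l) l)
    (hinc : ∀ l ∈ Ioo a b, l < c → 0 ≤ F' l) (hdec : ∀ l ∈ Ioo a b, c < l → F' l ≤ 0) :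
    UnimodalOn F a c b :=
  ⟨monotoneOn_Icc_of_hasDerivAt_nonneg (hF.mono (Icc_subset_Icc_right hc.2))
      (fun l hl => hd l ⟨hl.1, hl.2.trans_le hc.2⟩)
      fun l hl => hinc l ⟨hl.1, hl.2.trans_le hc.2⟩ hl.2,
    antitoneOn_Icc_of_hasDerivAt_nonpos (hF.mono (Icc_subset_Icc_left hc.1))
      (fun l hl => hd l ⟨hc.1.trans_lt hl.1, hl.2⟩)
      fun l hl => hdec l ⟨hc.1.trans_lt hl.1, hl.2⟩ hl.1⟩

theorem IsPreconnected.mem_image_or_forall_le_or_forall_ge {α : Type*} [TopologicalSpace α]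
    {s : Set α} (hs : IsPreconnected s) {G : α → ℝ} (hG : ContinuousOn G s) (μ : ℝ) :
    μ ∈ G '' s ∨ (∀ l ∈ s, μ ≤ G l) ∨ (∀ l ∈ s, G l ≤ μ) := by
  by_contra! ⟨hμ, ⟨l₁, hl₁, h₁⟩, ⟨l₂, hl₂, h₂⟩⟩
  exact hμ (hs.intermediate_value hl₁ hl₂ hG ⟨h₁.le, h₂.le⟩)

theorem monotoneOn_or_antitoneOn_of_hasDerivAt_mul_const {F A : ℝ → ℝ} {a b p : ℝ}
    (hF : ContinuousOn F (Icc a b)) (hd : ∀ l ∈ Ioo a b, HasDerivAt F (A l * p) l)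
    (hA : ContinuousOn A (Ioo a b)) (hA0 : ∀ l ∈ Ioo a b, A l ≠ 0) :
    MonotoneOn F (Icc a b) ∨ AntitoneOn F (Icc a b) := by
  have hAsign : (∀ l ∈ Ioo a b, 0 ≤ A l) ∨ (∀ l ∈ Ioo a b, A l ≤ 0) :=
    (isPreconnected_Ioo.mem_image_or_forall_le_or_forall_ge hA 0).resolve_left
      fun ⟨l, hl, h0⟩ => hA0 l hl h0
  have hsign : (∀ l ∈ Ioo a b, 0 ≤ A l * p) ∨ (∀ l ∈ Ioo a b, A l * p ≤ 0) := by
    rcases hAsign with hs | hs <;> rcases le_total 0 p with hp | hp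
    exacts [.inl fun l hl => mul_nonneg (hs l hl) hp,
      .inr fun l hl => mul_nonpos_of_nonneg_of_nonpos (hs l hl) hp,
      .inr fun l hl => mul_nonpos_of_nonpos_of_nonneg (hs l hl) hp,
      .inl fun l hl => mul_nonneg_of_nonpos_of_nonpos (hs l hl) hp]
  exact hsign.imp (monotoneOn_Icc_of_hasDerivAt_nonneg hF hd)
    (antitoneOn_Icc_of_hasDerivAt_nonpos hF hd)

theorem unimodalOn_of_strictMonoOn {F A G : ℝ → ℝ} {a b c μ : ℝ}
    (hF : ContinuousOn F (Icc a b)) (hc : c ∈ Icc a b)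
    (hd : ∀ l ∈ Ioo a b, HasDerivAt F (A l * (G l - μ)) l) (hA : ∀ l ∈ Ioo a b, A l < 0)
    (hG : ContinuousOn G (Ioo a b)) (hGm : StrictMonoOn G (Ioo a b))
    (hinv : μ ∈ G '' Ioo a b → c ∈ Ioo a b ∧ G c = μ)
    (hlo : (∀ l ∈ Ioo a b, μ ≤ G l) → c = a) (hhi : (∀ l ∈ Ioo a b, G l ≤ μ) → c = b) :
    UnimodalOn F a c b := by
  have hcross : ∀ l ∈ Ioo a b, (l < c → G l ≤ μ) ∧ (c < l → μ ≤ G l) := by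
    intro l hl
    rcases isPreconnected_Ioo.mem_image_or_forall_le_or_forall_ge hG μ with hμ | hμ | hμ
    · obtain ⟨hcI, rfl⟩ := hinv hμ
      exact ⟨fun hlc => (hGm hl hcI hlc).le, fun hcl => (hGm hcI hl hcl).le⟩
    · exact ⟨fun hlc => absurd (hlo hμ ▸ hlc) hl.1.not_gt, fun _ => hμ l hl⟩
    · exact ⟨fun _ => hμ l hl, fun hcl => absurd (hhi hμ ▸ hcl) hl.2.not_gt⟩
  refine unimodalOn_of_hasDerivAt hF hc hd (fun l hl hlc => ?_) fun l hl hcl => ?_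
  · exact mul_nonneg_of_nonpos_of_nonpos (hA l hl).le (sub_nonpos.2 ((hcross l hl).1 hlc))
  · exact mul_nonpos_of_nonpos_of_nonneg (hA l hl).le (sub_nonneg.2 ((hcross l hl).2 hcl))

theorem unimodalOn_of_strictAntiOn {F A G : ℝ → ℝ} {a b c μ : ℝ}
    (hF : ContinuousOn F (Icc a b)) (hc : c ∈ Icc a b)
    (hd : ∀ l ∈ Ioo a b, HasDerivAt F (A l * (G l - μ)) l) (hA : ∀ l ∈ Ioo a b, 0 < A l)
    (hG : ContinuousOn G (Ioo a b)) (hGm : StrictAntiOn G (Ioo a b))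
    (hinv : μ ∈ G '' Ioo a b → c ∈ Ioo a b ∧ G c = μ)
    (hlo : (∀ l ∈ Ioo a b, G l ≤ μ) → c = a) (hhi : (∀ l ∈ Ioo a b, μ ≤ G l) → c = b) :
    UnimodalOn F a c b := by
  refine unimodalOn_of_strictMonoOn (A := fun l => -A l) (G := fun l => -G l) (μ := -μ) hF hc
    (fun l hl => (hd l hl).congr_deriv (by ring)) (fun l hl => neg_neg_of_pos (hA l hl)) hG.neg
    hGm.neg (fun ⟨l, hl, hGl⟩ => hinv ⟨l, hl, neg_inj.1 hGl⟩ |>.imp_right neg_inj.2)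
    (fun h => hlo fun l hl => neg_le_neg_iff.1 (h l hl))
    (fun h => hhi fun l hl => neg_le_neg_iff.1 (h l hl))

theorem biSup_coe_eq_of_isMaxOn {α : Type*} {F : α → ℝ} {s : Set α} {c : α} (hc : c ∈ s)
    (hF : IsMaxOn F s c) : ⨆ l ∈ s, ((F l : ℝ) : EReal) = F c :=
  le_antisymm (iSup₂_le fun _ hl => EReal.coe_le_coe_iff.2 (hF hl))
    (le_iSup₂ (f := fun l _ => ((F l : ℝ) : EReal)) c hc)

theorem biSup_Icc_coe_eq_max {F : ℝ → ℝ} {a b : ℝ} (hab : a ≤ b)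
    (hF : MonotoneOn F (Icc a b) ∨ AntitoneOn F (Icc a b)) :
    ⨆ l ∈ Icc a b, ((F l : ℝ) : EReal) = (max (F a) (F b) : ℝ) := by
  have ha : a ∈ Icc a b := left_mem_Icc.2 hab
  have hb : b ∈ Icc a b := right_mem_Icc.2 hab
  rcases hF with hF | hF
  · rw [biSup_coe_eq_of_isMaxOn hb fun _ hl => hF hl hb hl.2, max_eq_right (hF ha hb hab)]
  · rw [biSup_coe_eq_of_isMaxOn ha fun _ hl => by exact hF ha hl hl.1,
      max_eq_left (hF ha hb hab)]

theorem QuasiconcaveOn.min_le_of_mem_Icc {F : ℝ → ℝ} {s : Set ℝ} (hF : QuasiconcaveOn ℝ s F)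
    {p q l : ℝ} (hp : p ∈ s) (hq : q ∈ s) (hl : l ∈ Icc p q) : min (F p) (F q) ≤ F l :=
  ((convex_iff_ordConnected.1 (hF _)).out ⟨hp, min_le_left _ _⟩ ⟨hq, min_le_right _ _⟩ hl).2

theorem exists_lt_or_gt_of_forall_exists_gt {X : Type*} {a b r : ℝ} {f : X → ℝ → ℝ}
    (hhigh : ∀ x, ∃ ν ∈ Icc a b, r < f x ν) {x : X} {l : ℝ}
    (hxl : f x l < r) : ∃ ν ∈ Icc a b, r < f x ν ∧ (ν < l ∨ l < ν) := by
  obtain ⟨ν, hν, hxν⟩ := hhigh x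
  exact ⟨ν, hν, hxν, lt_or_gt_of_ne fun h => (h ▸ hxl).asymm hxν⟩

section Minimax

variable {X : Type*} [TopologicalSpace X] {a b r : ℝ} {f : X → ℝ → ℝ}

theorem false_of_isPreconnected_sublevel (hfx : ∀ l ∈ Icc a b, Continuous (f · l))
    (hq : ∀ x, QuasiconcaveOn ℝ (Icc a b) (f x)) {l : ℝ}
    (hS : IsPreconnected {x | f x l < r}) (hhigh : ∀ x, ∃ ν ∈ Icc a b, r < f x ν)
    (hleft : ∃ x, f x l < r ∧ ∃ ν ∈ Icc a b, ν < l ∧ r < f x ν)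
    (hright : ∃ x, f x l < r ∧ ∃ ν ∈ Icc a b, l < ν ∧ r < f x ν) : False := by
  let U := ⋃ ν ∈ {ν ∈ Icc a b | ν < l}, {x | r < f x ν}
  let V := ⋃ ν ∈ {ν ∈ Icc a b | l < ν}, {x | r < f x ν}
  have hU : IsOpen U := isOpen_biUnion fun ν hν => isOpen_lt continuous_const (hfx ν hν.1)
  have hV : IsOpen V := isOpen_biUnion fun ν hν => isOpen_lt continuous_const (hfx ν hν.1)
  have hSUV : {x | f x l < r} ⊆ U ∪ V := fun x hxl => by
    obtain ⟨ν, hν, hxν, hνl | hlν⟩ := exists_lt_or_gt_of_forall_exists_gt hhigh hxl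
    exacts [Or.inl (mem_biUnion ⟨hν, hνl⟩ hxν), Or.inr (mem_biUnion ⟨hν, hlν⟩ hxν)]
  obtain ⟨x₁, hx₁l, ν₁, hν₁, hν₁l, hx₁ν₁⟩ := hleft
  obtain ⟨x₂, hx₂l, ν₂, hν₂, hlν₂, hx₂ν₂⟩ := hright
  obtain ⟨x, hxl, hxU, hxV⟩ := hS U V hU hV hSUV ⟨x₁, hx₁l, mem_biUnion ⟨hν₁, hν₁l⟩ hx₁ν₁⟩
    ⟨x₂, hx₂l, mem_biUnion ⟨hν₂, hlν₂⟩ hx₂ν₂⟩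
  obtain ⟨ν, ⟨hν, hνl⟩, hxν⟩ := mem_iUnion₂.1 hxU
  obtain ⟨ν', ⟨hν', hlν'⟩, hxν'⟩ := mem_iUnion₂.1 hxV
  exact hxl.not_ge <| (lt_min hxν hxν').le.trans <|
    (hq x).min_le_of_mem_Icc hν hν' ⟨hνl.le, hlν'.le⟩

theorem false_of_forall_exists_lt_of_forall_exists_gt (hab : a ≤ b)
    (hfx : ∀ l ∈ Icc a b, Continuous (f · l)) (hfl : ∀ x, ContinuousOn (f x) (Icc a b))
    (hq : ∀ x, QuasiconcaveOn ℝ (Icc a b) (f x)) {D : Set ℝ} (hD : D ⊆ Icc a b)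
    (hDdense : Icc a b ⊆ closure D) (hconn : ∀ l ∈ D, IsPreconnected {x | f x l < r})
    (hlow : ∀ l ∈ Icc a b, ∃ x, f x l < r) (hhigh : ∀ x, ∃ ν ∈ Icc a b, r < f x ν) : False := by
  have : PreconnectedSpace (Icc a b) := Subtype.preconnectedSpace isPreconnected_Icc
  let L : Set (Icc a b) := {l | ∃ x, f x l < r ∧ ∃ ν ∈ Icc a b, ν < l ∧ r < f x ν}
  let R : Set (Icc a b) := {l | ∃ x, f x l < r ∧ ∃ ν ∈ Icc a b, l < ν ∧ r < f x ν}
  have hcont : ∀ x, Continuous fun l : Icc a b => f x l := fun x =>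
    continuousOn_iff_continuous_domRestrict.1 (hfl x)
  have hL : IsOpen L := isOpen_iff_forall_mem_open.2 fun _ ⟨x, hxl, ν, hν, hνl, hxν⟩ =>
    ⟨{l | f x l < r ∧ ν < l}, fun _ hl => ⟨x, hl.1, ν, hν, hl.2, hxν⟩,
      (isOpen_lt (hcont x) continuous_const).inter
        (isOpen_lt continuous_const continuous_subtype_val),
      hxl, hνl⟩
  have hR : IsOpen R := isOpen_iff_forall_mem_open.2 fun _ ⟨x, hxl, ν, hν, hlν, hxν⟩ =>
    ⟨{l | f x l < r ∧ l < ν}, fun _ hl => ⟨x, hl.1, ν, hν, hl.2, hxν⟩,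
      (isOpen_lt (hcont x) continuous_const).inter
        (isOpen_lt continuous_subtype_val continuous_const),
      hxl, hlν⟩
  have hLR : univ ⊆ L ∪ R := fun l _ => by
    obtain ⟨x, hxl⟩ := hlow l l.2
    obtain ⟨ν, hν, hxν, hνl | hlν⟩ := exists_lt_or_gt_of_forall_exists_gt hhigh hxl
    exacts [Or.inl ⟨x, hxl, ν, hν, hνl, hxν⟩, Or.inr ⟨x, hxl, ν, hν, hlν, hxν⟩]
  have hbL : (⟨b, right_mem_Icc.2 hab⟩ : Icc a b) ∈ L := by
    obtain ⟨x, hxb⟩ := hlow b (right_mem_Icc.2 hab)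
    obtain ⟨ν, hν, hxν, hνb | hbν⟩ := exists_lt_or_gt_of_forall_exists_gt hhigh hxb
    exacts [⟨x, hxb, ν, hν, hνb, hxν⟩, absurd hν.2 hbν.not_ge]
  have haR : (⟨a, left_mem_Icc.2 hab⟩ : Icc a b) ∈ R := by
    obtain ⟨x, hxa⟩ := hlow a (left_mem_Icc.2 hab)
    obtain ⟨ν, hν, hxν, hνa | haν⟩ := exists_lt_or_gt_of_forall_exists_gt hhigh hxa
    exacts [absurd hν.1 hνa.not_ge, ⟨x, hxa, ν, hν, haν, hxν⟩]
  obtain ⟨l, -, hl⟩ := isPreconnected_univ L R hL hR hLR ⟨_, trivial, hbL⟩ ⟨_, trivial, haR⟩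
  have hdense : Dense ((↑) ⁻¹' D : Set (Icc a b)) := by
    rwa [Subtype.dense_iff, Subtype.image_preimage_coe, inter_eq_right.2 hD]
  obtain ⟨l, ⟨hlL, hlR⟩, hlD⟩ := hdense.inter_open_nonempty _ (hL.inter hR) ⟨l, hl⟩
  exact false_of_isPreconnected_sublevel hfx hq (hconn l hlD) hhigh hlL hlR

theorem iInf_biSup_eq_biSup_iInf_of_isPreconnected_sublevel (hab : a ≤ b)
    (hfx : ∀ l ∈ Icc a b, Continuous (f · l)) (hfl : ∀ x, ContinuousOn (f x) (Icc a b))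
    (hq : ∀ x, QuasiconcaveOn ℝ (Icc a b) (f x)) {D : Set ℝ} (hD : D ⊆ Icc a b)
    (hDdense : Icc a b ⊆ closure D)
    (hconn : ∀ l ∈ D, ∀ r : ℝ, IsPreconnected {x | f x l < r}) :
    ⨅ x, ⨆ l ∈ Icc a b, (f x l : EReal) = ⨆ l ∈ Icc a b, ⨅ x, (f x l : EReal) := by
  refine le_antisymm (not_lt.1 fun hlt => ?_) <| iSup₂_le fun l hl =>
    iInf_mono fun x => le_iSup₂ (f := fun l _ => (f x l : EReal)) l hl
  obtain ⟨r, hr₁, hr₂⟩ := EReal.exists_between_coe_real hlt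
  refine false_of_forall_exists_lt_of_forall_exists_gt hab hfx hfl hq hD hDdense
    (fun l hl => hconn l hl r) (fun l hl => ?_) fun x => ?_
  · obtain ⟨x, hx⟩ := iInf_lt_iff.1 <|
      (le_iSup₂ (f := fun l _ => ⨅ x, (f x l : EReal)) l hl).trans_lt hr₁
    exact ⟨x, EReal.coe_lt_coe_iff.1 hx⟩
  · obtain ⟨ν, hν, hxν⟩ := lt_biSup_iff.1 (hr₂.trans_le (iInf_le _ x))
    exact ⟨ν, hν, EReal.coe_lt_coe_iff.1 hxν⟩

end Minimax

/-- Theorem 1.1: value of the upper envelope `Φ` and the minimax equality, on a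
compact interval `I = [a,b]`.  `g = β'/α'`, `h` is the (extended) inverse of `g`
as described in the statement. -/
theorem stmt0
    {X : Type*} [TopologicalSpace X]
    (a b : ℝ) (hab : a < b)
    (φ ψ ω : X → ℝ) (α β α' β' : ℝ → ℝ)
    (hφ : Continuous φ) (hψ : Continuous ψ) (hω : Continuous ω)
    (hα : ContinuousOn α (Icc a b)) (hβ : ContinuousOn β (Icc a b))
    -- (i₁) : a dense set of parameters with inf-connected slice functions
    (D : Set ℝ) (hD : D ⊆ Icc a b) (hDdense : Icc a b ⊆ closure D)
    (hconn : ∀ l ∈ D, ∀ r : ℝ,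
      IsPreconnected {x : X | α l * φ x + β l * ψ x + ω x < r})
    -- (i₂) : α, β are C¹ on (a,b), α' ≠ 0 there, and g = β'/α' is strictly monotone
    (hα' : ∀ l ∈ Ioo a b, HasDerivAt α (α' l) l)
    (hβ' : ∀ l ∈ Ioo a b, HasDerivAt β (β' l) l)
    (hα'c : ContinuousOn α' (Ioo a b)) (hβ'c : ContinuousOn β' (Ioo a b))
    (hα'0 : ∀ l ∈ Ioo a b, α' l ≠ 0)
    (g : ℝ → ℝ) (hg : ∀ l ∈ Ioo a b, g l = β' l / α' l)
    -- the function h : ℝ → [a,b], inverting g on g((a,b))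
    (h : ℝ → ℝ)
    (hhmem : ∀ μ : ℝ, h μ ∈ Icc a b)
    (hhinv : ∀ μ ∈ g '' Ioo a b, h μ ∈ Ioo a b ∧ g (h μ) = μ)
    -- (i₃) or (i₄), together with the corresponding boundary values of h
    (hcase :
      (StrictMonoOn g (Ioo a b) ∧
        (∀ l ∈ Ioo a b, ∀ x : X, ψ x ≠ 0 → α' l * ψ x < 0) ∧
        (∀ μ : ℝ, (∀ l ∈ Ioo a b, μ ≤ g l) → h μ = a) ∧
        (∀ μ : ℝ, (∀ l ∈ Ioo a b, g l ≤ μ) → h μ = b)) ∨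
      (StrictAntiOn g (Ioo a b) ∧
        (∀ l ∈ Ioo a b, ∀ x : X, ψ x ≠ 0 → 0 < α' l * ψ x) ∧
        (∀ μ : ℝ, (∀ l ∈ Ioo a b, g l ≤ μ) → h μ = a) ∧
        (∀ μ : ℝ, (∀ l ∈ Ioo a b, μ ≤ g l) → h μ = b))) :
    (∀ x : X, ψ x ≠ 0 →
      (⨆ l ∈ Icc a b, ((α l * φ x + β l * ψ x + ω x : ℝ) : EReal)) =
        ((α (h (-(φ x / ψ x))) * φ x + β (h (-(φ x / ψ x))) * ψ x + ω x : ℝ) : EReal)) ∧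
    (∀ x : X, ψ x = 0 →
      (⨆ l ∈ Icc a b, ((α l * φ x + β l * ψ x + ω x : ℝ) : EReal)) =
        ((max (α a * φ x) (α b * φ x) + ω x : ℝ) : EReal)) ∧
    (⨅ x : X, ⨆ l ∈ Icc a b, ((α l * φ x + β l * ψ x + ω x : ℝ) : EReal)) =
      (⨆ l ∈ Icc a b, ⨅ x : X, ((α l * φ x + β l * ψ x + ω x : ℝ) : EReal)) := by
  set F : X → ℝ → ℝ := fun x l => α l * φ x + β l * ψ x + ω x
  have hFl : ∀ x, ContinuousOn (F x) (Icc a b) := fun x => by fun_prop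
  have hF' : ∀ x, ∀ l ∈ Ioo a b, HasDerivAt (F x) (α' l * φ x + β' l * ψ x) l :=
    fun x l hl => (((hα' l hl).mul_const _).add ((hβ' l hl).mul_const _)).add_const _
  have hpeak : ∀ x, ψ x ≠ 0 → UnimodalOn (F x) a (h (-(φ x / ψ x))) b := by
    intro x hx
    have hgc : ContinuousOn g (Ioo a b) := (hβ'c.div hα'c hα'0).congr hg
    have hd : ∀ l ∈ Ioo a b, HasDerivAt (F x) (α' l * ψ x * (g l - -(φ x / ψ x))) l :=
      fun l hl => (hF' x l hl).congr_deriv (by rw [hg l hl]; field_simp [hα'0 l hl]; ring)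
    rcases hcase with ⟨hgm, hsgn, hha, hhb⟩ | ⟨hgm, hsgn, hha, hhb⟩
    · exact unimodalOn_of_strictMonoOn (hFl x) (hhmem _) hd (fun l hl => hsgn l hl x hx) hgc
        hgm (hhinv _) (hha _) (hhb _)
    · exact unimodalOn_of_strictAntiOn (hFl x) (hhmem _) hd (fun l hl => hsgn l hl x hx) hgc
        hgm (hhinv _) (hha _) (hhb _)
  have hmono : ∀ x, ψ x = 0 → MonotoneOn (F x) (Icc a b) ∨ AntitoneOn (F x) (Icc a b) :=
    fun x hx => monotoneOn_or_antitoneOn_of_hasDerivAt_mul_const (hFl x)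
      (fun l hl => (hF' x l hl).congr_deriv (by rw [hx, mul_zero, add_zero])) hα'c hα'0
  have hq : ∀ x, QuasiconcaveOn ℝ (Icc a b) (F x) := fun x => by
    by_cases hx : ψ x = 0
    · exact (hmono x hx).elim (·.quasiconcaveOn (convex_Icc a b))
        (·.quasiconcaveOn (convex_Icc a b))
    · exact (hpeak x hx).quasiconcaveOn
  refine ⟨fun x hx => biSup_coe_eq_of_isMaxOn (hhmem _) (hpeak x hx).isMaxOn, fun x hx => ?_,
    iInf_biSup_eq_biSup_iInf_of_isPreconnected_sublevel hab.le (fun l _ => by fun_prop) hFl hq hD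
      hDdense hconn⟩
  rw [biSup_Icc_coe_eq_max hab.le (hmono x hx)]
  simp [F, hx, max_add_add_right]
end

section
/- Let X be a Hausdorff topological space and let f : X → ℝ be a lower semicontinuous function such that, for some r > inf_X f, the sublevel set f⁻¹((−∞, r]) is compact and disconnected. Then f has at least two local minima, i.e., there exist two distinct points x₁*, x₂* ∈ X each of which is a local minimum of f. -/
open Set Filter

/-- A lower semicontinuous function attains its minimum on a nonempty compact set. -/
lemma lsc_exists_min {X : Type*} [TopologicalSpace X] {f : X → ℝ}
    (hf : LowerSemicontinuous f) {K : Set X} (hK : IsCompact K) (hne : K.Nonempty) :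
    ∃ x ∈ K, ∀ y ∈ K, f x ≤ f y := by
  by_contra h
  push_neg at h
  -- cover K by sets {x | f y < f x} for y ∈ K
  have hcov : K ⊆ ⋃ y ∈ K, {x | f y < f x} := by
    intro x hx
    obtain ⟨y, hy, hlt⟩ := h x hx
    exact mem_biUnion hy hlt
  obtain ⟨t, htK, htfin, hcov'⟩ := hK.elim_finite_subcover_image
    (fun y _ => hf.isOpen_preimage (f y)) hcov
  have htne : t.Nonempty := by
    obtain ⟨x, hx⟩ := hne
    obtain ⟨y, hy, -⟩ := mem_iUnion₂.1 (hcov' hx)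
    exact ⟨y, hy⟩
  -- pick y₀ in the finite set t with minimal f-value
  obtain ⟨y₀, hy₀t, hmin⟩ := Set.exists_min_image t f htfin htne
  have hy₀K : y₀ ∈ K := htK hy₀t
  obtain ⟨y, hyt, hlt⟩ := mem_iUnion₂.1 (hcov' hy₀K)
  exact absurd hlt (not_lt.2 (hmin y hyt))

/-- Proposition 3.1: if X is Hausdorff, f lower semicontinuous, and for some
r > inf_X f the sublevel set f⁻¹((-∞, r]) is compact and disconnected, then
f has at least two local minima. -/
theorem stmt4
    {X : Type*} [TopologicalSpace X] [T2Space X]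
    (f : X → ℝ) (hf : LowerSemicontinuous f)
    (r : ℝ)
    (hr : (⨅ x : X, (f x : EReal)) < (r : EReal))
    (hcpt : IsCompact (f ⁻¹' Iic r))
    (hdisc : ¬ IsPreconnected (f ⁻¹' Iic r)) :
    ∃ x₁ x₂ : X, x₁ ≠ x₂ ∧ IsLocalMin f x₁ ∧ IsLocalMin f x₂ := by
  set S := f ⁻¹' Iic r with hS
  -- S is closed since f is lower semicontinuous
  have hSclosed : IsClosed S := by
    have : IsOpen {x | r < f x} := hf.isOpen_preimage r
    have : IsClosed {x | ¬ r < f x} := isClosed_compl_iff.2 this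
    simpa [S, Set.preimage, Iic, not_lt] using this
  -- unfold disconnectedness
  rw [IsPreconnected] at hdisc
  push_neg at hdisc
  obtain ⟨u, v, hu, hv, hcov, hune, hvne, hdisj⟩ := hdisc
  set A := S ∩ u with hA
  set B := S ∩ v with hB
  have hABdisj : ∀ x, x ∈ A → x ∈ B → False := by
    intro x hxA hxB
    exact (Set.eq_empty_iff_forall_notMem.1 hdisj) x ⟨hxA.1, hxA.2, hxB.2⟩
  -- A and B are compact
  have hAclosed : IsClosed A := by
    have : A = S \ v := by
      ext x
      constructor
      · intro hx
        exact ⟨hx.1, fun hxv => hABdisj x hx ⟨hx.1, hxv⟩⟩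
      · intro hx
        rcases hcov hx.1 with hxu | hxv
        · exact ⟨hx.1, hxu⟩
        · exact absurd hxv hx.2
    rw [this]
    exact hSclosed.sdiff hv
  have hBclosed : IsClosed B := by
    have : B = S \ u := by
      ext x
      constructor
      · intro hx
        exact ⟨hx.1, fun hxu => hABdisj x ⟨hx.1, hxu⟩ hx⟩
      · intro hx
        rcases hcov hx.1 with hxu | hxv
        · exact absurd hxu hx.2
        · exact ⟨hx.1, hxv⟩
    rw [this]
    exact hSclosed.sdiff hu
  have hAcpt : IsCompact A := hcpt.of_isClosed_subset hAclosed (inter_subset_left)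
  have hBcpt : IsCompact B := hcpt.of_isClosed_subset hBclosed (inter_subset_left)
  -- Minimizers on A and B
  obtain ⟨x₁, hx₁A, hx₁min⟩ := lsc_exists_min hf hAcpt hune
  obtain ⟨x₂, hx₂B, hx₂min⟩ := lsc_exists_min hf hBcpt hvne
  refine ⟨x₁, x₂, ?_, ?_, ?_⟩
  · rintro rfl
    exact hABdisj x₁ hx₁A hx₂B
  · -- local min on u
    have : ∀ x ∈ u, f x₁ ≤ f x := by
      intro x hxu
      by_cases hfx : f x ≤ r
      · exact hx₁min x ⟨hfx, hxu⟩
      · exact le_trans hx₁A.1 (le_of_not_ge hfx)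
    exact Filter.eventually_of_mem (hu.mem_nhds hx₁A.2) this
  · have : ∀ x ∈ v, f x₂ ≤ f x := by
      intro x hxv
      by_cases hfx : f x ≤ r
      · exact hx₂min x ⟨hfx, hxv⟩
      · exact le_trans hx₂B.1 (le_of_not_ge hfx)
    exact Filter.eventually_of_mem (hv.mem_nhds hx₂B.2) this
end

section
/- Let X be a Hausdorff topological space, I ⊆ ℝ an interval, and φ, ψ, ω : X → ℝ, α, β : I → ℝ continuous functions. Assume (i2') holds (α, β differentiable on a set A with int(I) ⊆ A ⊆ I, α'(λ) ≠ 0 on A, g := β'/α' strictly monotone on A, and −φ(x)/ψ(x) ∈ g(A) for all x with ψ(x) ≠ 0), jointly with either (i3') (g increasing on A and α'(λ)ψ(x) < 0 for all λ ∈ A and x with ψ(x) ≠ 0) or (i4') (g decreasing on A and α'(λ)ψ(x) > 0 for all λ ∈ A and x with ψ(x) ≠ 0). Moreover assume that for every λ ∈ I the function x ↦ α(λ)φ(x) + β(λ)ψ(x) + ω(x) is inf-compact, that ψ(x) ≠ 0 for all x ∈ X, and that for some x₀ ∈ X the function λ ↦ α(λ)φ(x₀) + β(λ)ψ(x₀)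 is sup-compact on I. Then at least one of the following holds: (a) there exists x̃ ∈ X such that α(g⁻¹(−φ(x̃)/ψ(x̃)))φ(x̃) + β(g⁻¹(−φ(x̃)/ψ(x̃)))ψ(x̃) + ω(x̃) = inf_{x∈X} ( α(g⁻¹(−φ(x̃)/ψ(x̃)))φ(x) + β(g⁻¹(−φ(x̃)/ψ(x̃)))ψ(x) + ω(x) ); (b) there exists a nonempty open interval J ⊆ I such that for each λ ∈ J the function x ↦ α(λ)φ(x) + β(λ)ψ(x) + ω(x) has at least two local minima. -/
open Set Filter Topology

/-- Abstract minimax alternative: `f l x` is a family of functions, continuous in `x`,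
continuous in `l` on `I`, strictly increasing in `l` up to `η x` and strictly decreasing
after, inf-compact in `x` for each `l ∈ I`, and sup-compact in `l` at some `x₀`.
Then either some `xt` minimizes `f (η xt)` globally, or there is a nonempty open
subinterval of `I` on which every slice has two local minima. -/
theorem stmt5_aux {X : Type*} [TopologicalSpace X] [T2Space X]
    (I : Set ℝ) (hI : I.OrdConnected) (hInonempty : I.Nonempty)
    (f : ℝ → X → ℝ) (η : X → ℝ)
    (hηI : ∀ x, η x ∈ I)
    (hfc : ∀ l : ℝ, Continuous (f l))
    (hflc : ∀ x : X, ContinuousOn (fun l => f l x) I)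
    (hmono : ∀ x : X, StrictMonoOn (fun l => f l x) (I ∩ Iic (η x)))
    (hanti : ∀ x : X, StrictAntiOn (fun l => f l x) (I ∩ Ici (η x)))
    (hinfcpt : ∀ l ∈ I, ∀ r : ℝ, IsCompact {x : X | f l x ≤ r})
    (x₀ : X)
    (hsupcpt : ∀ r : ℝ, IsCompact {l : ℝ | l ∈ I ∧ r ≤ f l x₀}) :
    (∃ xt : X, ∀ x : X, f (η xt) xt ≤ f (η xt) x) ∨
    (∃ u v : ℝ, u < v ∧ Ioo u v ⊆ I ∧ ∀ l ∈ Ioo u v,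
      ∃ x₁ x₂ : X, x₁ ≠ x₂ ∧ IsLocalMin (f l) x₁ ∧ IsLocalMin (f l) x₂) := by
  classical
  by_contra hcon
  push_neg at hcon
  obtain ⟨ha, hb⟩ := hcon
  haveI : Nonempty X := ⟨x₀⟩
  have hIooI : ∀ a b : ℝ, a ∈ I → b ∈ I → Ioo a b ⊆ I := fun a b ha' hb' l hl =>
    hI.out ha' hb' ⟨hl.1.le, hl.2.le⟩
  -- basic monotonicity consequences
  have hmonole : ∀ (x : X), ∀ l₁ ∈ I, ∀ l₂ ∈ I, l₁ ≤ l₂ → l₂ ≤ η x → f l₁ x ≤ f l₂ x := by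
    intro x l₁ h1 l₂ h2 h12 h2η
    rcases eq_or_lt_of_le h12 with rfl | h
    · exact le_rfl
    · exact ((hmono x) ⟨h1, (h12.trans h2η : l₁ ≤ η x)⟩ ⟨h2, h2η⟩ h).le
  have hantile : ∀ (x : X), ∀ l₁ ∈ I, ∀ l₂ ∈ I, l₁ ≤ l₂ → η x ≤ l₁ → f l₂ x ≤ f l₁ x := by
    intro x l₁ h1 l₂ h2 h12 h1η
    rcases eq_or_lt_of_le h12 with rfl | h
    · exact le_rfl
    · exact ((hanti x) ⟨h1, h1η⟩ ⟨h2, h1η.trans h12⟩ h).le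
  have hpeak : ∀ (x : X), ∀ l ∈ I, f l x ≤ f (η x) x := by
    intro x l hl
    rcases le_total l (η x) with h | h
    · exact hmonole x l hl (η x) (hηI x) h le_rfl
    · exact hantile x (η x) (hηI x) l hl h le_rfl
  have hpeaklt : ∀ (x : X), ∀ l ∈ I, l ≠ η x → f l x < f (η x) x := by
    intro x l hl hne
    rcases lt_or_gt_of_ne hne with h | h
    · exact (hmono x) ⟨hl, h.le⟩ ⟨hηI x, mem_Iic.mpr le_rfl⟩ h
    · exact (hanti x) ⟨hηI x, mem_Ici.mpr le_rfl⟩ ⟨hl, h.le⟩ h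
  -- minimizers of each slice
  have hminex : ∀ l : ℝ, ∃ xs : X, l ∈ I → ∀ x : X, f l xs ≤ f l x := by
    intro l
    by_cases hl : l ∈ I
    · have hK : IsCompact {x : X | f l x ≤ f l x₀} := hinfcpt l hl _
      have hKne : {x : X | f l x ≤ f l x₀}.Nonempty := ⟨x₀, show f l x₀ ≤ f l x₀ from le_rfl⟩
      obtain ⟨xs, _, hmin⟩ := hK.exists_isMinOn hKne ((hfc l).continuousOn)
      refine ⟨xs, fun _ x => ?_⟩
      by_cases hx : f l x ≤ f l x₀
      · exact isMinOn_iff.mp hmin x hx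
      · exact le_trans (isMinOn_iff.mp hmin x₀ (show f l x₀ ≤ f l x₀ from le_rfl)) (le_of_not_ge hx)
    · exact ⟨x₀, fun h => absurd h hl⟩
  choose xmin hxmin using hminex
  -- attainment of γ = sup of minima
  have hScpt : ∀ r : ℝ, IsCompact {l : ℝ | l ∈ I ∧ ∀ x : X, r ≤ f l x} := by
    intro r
    have heq : {l : ℝ | l ∈ I ∧ ∀ x : X, r ≤ f l x}
        = ⋂ x : X, ({l : ℝ | l ∈ I ∧ r ≤ f l x₀} ∩ (fun l => f l x) ⁻¹' Ici r) := by
      ext l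
      simp only [mem_iInter, mem_inter_iff, mem_setOf_eq, mem_preimage, mem_Ici]
      exact ⟨fun ⟨h1, h2⟩ x => ⟨⟨h1, h2 x₀⟩, h2 x⟩, fun h => ⟨(h x₀).1.1, fun x => (h x).2⟩⟩
    rw [heq]
    refine IsCompact.of_isClosed_subset (hsupcpt r) (isClosed_iInter fun x => ?_)
      fun l hl => (mem_iInter.mp hl x₀).1
    exact ContinuousOn.preimage_isClosed_of_isClosed ((hflc x).mono fun l hl => hl.1)
      (hsupcpt r).isClosed isClosed_Ici
  have hmaxex : ∃ l₀ ∈ I, ∀ l ∈ I, f l (xmin l) ≤ f l₀ (xmin l₀) := by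
    haveI : Nonempty I := hInonempty.to_subtype
    set G : I → Set ℝ := fun μ => {l : ℝ | l ∈ I ∧ ∀ x : X, f (μ : ℝ) (xmin μ) ≤ f l x} with hG
    have hGne : ∀ μ : I, (G μ).Nonempty := fun μ => ⟨μ, μ.2, fun x => hxmin μ μ.2 x⟩
    have hdir : Directed (· ⊇ ·) G := by
      intro μ ν
      rcases le_total (f (μ : ℝ) (xmin μ)) (f (ν : ℝ) (xmin ν)) with h | h
      · exact ⟨ν, fun l hl => ⟨hl.1, fun x => h.trans (hl.2 x)⟩, fun l hl => hl⟩
      · exact ⟨μ, fun l hl => hl, fun l hl => ⟨hl.1, fun x => h.trans (hl.2 x)⟩⟩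
    obtain ⟨l₀, hl₀⟩ := IsCompact.nonempty_iInter_of_directed_nonempty_isCompact_isClosed
      G hdir hGne (fun μ => hScpt _) (fun μ => (hScpt _).isClosed)
    rw [mem_iInter] at hl₀
    obtain ⟨lw, hlw⟩ := hInonempty
    exact ⟨l₀, (hl₀ ⟨lw, hlw⟩).1, fun l hl => (hl₀ ⟨l, hl⟩).2 (xmin l₀)⟩
  obtain ⟨l₀, hl₀I, hl₀max⟩ := hmaxex
  set γ : ℝ := f l₀ (xmin l₀) with hγdef
  have hmγ : ∀ l ∈ I, f l (xmin l) ≤ γ := hl₀max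
  have hmle : ∀ l ∈ I, ∀ x : X, f l (xmin l) ≤ f l x := fun l hl x => hxmin l hl x
  have hFγ : ∀ x : X, γ < f (η x) x := by
    intro x
    by_contra hle
    push_neg at hle
    have h1 : γ ≤ f l₀ x := hmle l₀ hl₀I x
    have h2 : f l₀ x ≤ f (η x) x := hpeak x l₀ hl₀I
    have heq : l₀ = η x := by
      by_contra hne
      exact absurd (hpeaklt x l₀ hl₀I hne) (not_lt.mpr (by linarith))
    obtain ⟨y, hy⟩ := ha x
    have h3 : γ ≤ f (η x) y := heq ▸ hmle l₀ hl₀I y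
    linarith
  -- attainment of δ = inf of the peak function
  have hδex : ∃ xh : X, ∀ y : X, f (η xh) xh ≤ f (η y) y := by
    haveI : Nonempty I := hInonempty.to_subtype
    set D : X → Set X := fun y => {x : X | ∀ l ∈ I, f l x ≤ f (η y) y} with hD
    have hDne : ∀ y, (D y).Nonempty := fun y => ⟨y, fun l hl => hpeak y l hl⟩
    have hDeq : ∀ y, D y = ⋂ l : I, {x : X | f (l : ℝ) x ≤ f (η y) y} := by
      intro y; ext x
      simp only [hD, mem_iInter, mem_setOf_eq, Subtype.forall]
    have hDcl : ∀ y, IsClosed (D y) := by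
      intro y; rw [hDeq y]
      exact isClosed_iInter fun l => isClosed_le (hfc l) continuous_const
    have hDcpt : ∀ y, IsCompact (D y) := by
      intro y
      refine IsCompact.of_isClosed_subset (hinfcpt l₀ hl₀I (f (η y) y)) (hDcl y)
        fun x hx => hx l₀ hl₀I
    have hdir : Directed (· ⊇ ·) D := by
      intro y z
      rcases le_total (f (η y) y) (f (η z) z) with h | h
      · exact ⟨y, fun x hx => hx, fun x hx l hl => (hx l hl).trans h⟩
      · exact ⟨z, fun x hx l hl => (hx l hl).trans h, fun x hx => hx⟩
    obtain ⟨xh, hxh⟩ := IsCompact.nonempty_iInter_of_directed_nonempty_isCompact_isClosed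
      D hdir hDne hDcpt hDcl
    rw [mem_iInter] at hxh
    exact ⟨xh, fun y => (hxh y) (η xh) (hηI xh)⟩
  obtain ⟨xh, hδmin⟩ := hδex
  set δ : ℝ := f (η xh) xh with hδdef
  have hγδ : γ < δ := hFγ xh
  set ρ : ℝ := (γ + δ) / 2 with hρdef
  have hγρ : γ < ρ := by rw [hρdef]; linarith
  have hρδ : ρ < δ := by rw [hρdef]; linarith
  have hδF : ∀ x : X, ρ < f (η x) x := fun x => lt_of_lt_of_le hρδ (hδmin x)
  -- the sets P and N
  set P : Set ℝ := {l : ℝ | l ∈ I ∧ ∃ x : X, f l x < ρ ∧ η x < l} with hPdef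
  set N : Set ℝ := {l : ℝ | l ∈ I ∧ ∃ x : X, f l x < ρ ∧ l < η x} with hNdef
  have hPN : ∀ l ∈ I, l ∈ P ∨ l ∈ N := by
    intro l hl
    have h1 : f l (xmin l) < ρ := lt_of_le_of_lt (hmγ l hl) hγρ
    have h2 : η (xmin l) ≠ l := fun he =>
      absurd (hδF (xmin l)) (by rw [he]; exact not_lt.mpr h1.le)
    rcases lt_or_gt_of_ne h2 with h | h
    · exact Or.inl ⟨hl, xmin l, h1, h⟩
    · exact Or.inr ⟨hl, xmin l, h1, h⟩
  have hPup : ∀ l ∈ P, ∀ l' ∈ I, l ≤ l' → l' ∈ P := by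
    intro l hl l' hl' hle
    obtain ⟨hlI, x, hfx, hηx⟩ := hl
    exact ⟨hl', x, lt_of_le_of_lt (hantile x l hlI l' hl' hle hηx.le) hfx,
      lt_of_lt_of_le hηx hle⟩
  have hNdown : ∀ l ∈ N, ∀ l' ∈ I, l' ≤ l → l' ∈ N := by
    intro l hl l' hl' hle
    obtain ⟨hlI, x, hfx, hηx⟩ := hl
    exact ⟨hl', x, lt_of_le_of_lt (hmonole x l' hl' l hlI hle hηx.le) hfx,
      lt_of_le_of_lt hle hηx⟩
  -- l ∈ P ∩ N gives two local minima for f l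
  have htwo : ∀ l, l ∈ P → l ∈ N →
      ∃ x₁ x₂ : X, x₁ ≠ x₂ ∧ IsLocalMin (f l) x₁ ∧ IsLocalMin (f l) x₂ := by
    intro l hlP hlN
    obtain ⟨hlI, xp, hxpf, hxpη⟩ := hlP
    obtain ⟨-, xn, hxnf, hxnη⟩ := hlN
    set U : Set X := ⋃ p : {l' : ℝ // l' ∈ I ∧ l < l'}, (f p.1) ⁻¹' Ioi ρ with hUdef
    set V : Set X := ⋃ p : {l' : ℝ // l' ∈ I ∧ l' < l}, (f p.1) ⁻¹' Ioi ρ with hVdef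
    have hUopen : IsOpen U := isOpen_iUnion fun p => isOpen_Ioi.preimage (hfc p.1)
    have hVopen : IsOpen V := isOpen_iUnion fun p => isOpen_Ioi.preimage (hfc p.1)
    have hdisj : ∀ x : X, f l x ≤ ρ → x ∈ U → x ∈ V → False := by
      intro x hx hxU hxV
      obtain ⟨⟨l₁, hl₁I, hll₁⟩, hx1⟩ := mem_iUnion.mp hxU
      obtain ⟨⟨l₂, hl₂I, hl₂l⟩, hx2⟩ := mem_iUnion.mp hxV
      have hx1' : ρ < f l₁ x := hx1
      have hx2' : ρ < f l₂ x := hx2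
      rcases le_total l (η x) with h | h
      · have := hmonole x l₂ hl₂I l hlI hl₂l.le h
        linarith
      · have := hantile x l hlI l₁ hl₁I hll₁.le h
        linarith
    have hcover : ∀ x : X, f l x ≤ ρ → x ∈ U ∪ V := by
      intro x hx
      have hne : η x ≠ l := fun he => absurd (hδF x) (by rw [he]; exact not_lt.mpr hx)
      rcases lt_or_gt_of_ne hne with h | h
      · exact Or.inr (mem_iUnion.mpr ⟨⟨η x, hηI x, h⟩, hδF x⟩)
      · exact Or.inl (mem_iUnion.mpr ⟨⟨η x, hηI x, h⟩, hδF x⟩)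
    have hCcpt : IsCompact {x : X | f l x ≤ ρ} := hinfcpt l hlI ρ
    -- first local minimum
    have hcv : IsCompact ({x : X | f l x ≤ ρ} ∩ Vᶜ) := hCcpt.inter_right hVopen.isClosed_compl
    have hxnU : xn ∈ U := mem_iUnion.mpr ⟨⟨η xn, hηI xn, hxnη⟩, hδF xn⟩
    have hxnmem : xn ∈ {x : X | f l x ≤ ρ} ∩ Vᶜ :=
      ⟨hxnf.le, fun hV => hdisj xn hxnf.le hxnU hV⟩
    obtain ⟨x₁, hx₁mem, hx₁min⟩ := hcv.exists_isMinOn ⟨xn, hxnmem⟩ ((hfc l).continuousOn)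
    have hx₁ρ : f l x₁ < ρ := lt_of_le_of_lt (isMinOn_iff.mp hx₁min xn hxnmem) hxnf
    have hx₁U : x₁ ∈ U := by
      rcases hcover x₁ hx₁ρ.le with h | h
      · exact h
      · exact absurd h hx₁mem.2
    have hx₁loc : IsLocalMin (f l) x₁ := by
      refine Filter.eventually_of_mem (hUopen.mem_nhds hx₁U) fun y hy => ?_
      by_cases hyρ : f l y ≤ ρ
      · exact isMinOn_iff.mp hx₁min y ⟨hyρ, fun hyV => hdisj y hyρ hy hyV⟩
      · exact hx₁ρ.le.trans (le_of_not_ge hyρ)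
    -- second local minimum
    have hcu : IsCompact ({x : X | f l x ≤ ρ} ∩ Uᶜ) := hCcpt.inter_right hUopen.isClosed_compl
    have hxpV : xp ∈ V := mem_iUnion.mpr ⟨⟨η xp, hηI xp, hxpη⟩, hδF xp⟩
    have hxpmem : xp ∈ {x : X | f l x ≤ ρ} ∩ Uᶜ :=
      ⟨hxpf.le, fun hU => hdisj xp hxpf.le hU hxpV⟩
    obtain ⟨x₂, hx₂mem, hx₂min⟩ := hcu.exists_isMinOn ⟨xp, hxpmem⟩ ((hfc l).continuousOn)
    have hx₂ρ : f l x₂ < ρ := lt_of_le_of_lt (isMinOn_iff.mp hx₂min xp hxpmem) hxpf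
    have hx₂V : x₂ ∈ V := by
      rcases hcover x₂ hx₂ρ.le with h | h
      · exact absurd h hx₂mem.2
      · exact h
    have hx₂loc : IsLocalMin (f l) x₂ := by
      refine Filter.eventually_of_mem (hVopen.mem_nhds hx₂V) fun y hy => ?_
      by_cases hyρ : f l y ≤ ρ
      · exact isMinOn_iff.mp hx₂min y ⟨hyρ, fun hyU => hdisj y hyρ hyU hy⟩
      · exact hx₂ρ.le.trans (le_of_not_ge hyρ)
    exact ⟨x₁, x₂, fun he => hx₂mem.2 (he ▸ hx₁U), hx₁loc, hx₂loc⟩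
  -- two points of P ∩ N are impossible (else conclusion (b) would hold)
  have hnoIoo : ∀ u v : ℝ, u < v → u ∈ P → u ∈ N → v ∈ P → v ∈ N → False := by
    intro u v huv huP huN hvP hvN
    have hIoo : Ioo u v ⊆ I := hIooI u v huP.1 hvP.1
    obtain ⟨l, hlmem, hlbad⟩ := hb u v huv hIoo
    obtain ⟨x₁, x₂, hne, h1, h2⟩ := htwo l (hPup u huP l (hIoo hlmem) hlmem.1.le)
      (hNdown v hvN l (hIoo hlmem) hlmem.2.le)
    exact hlbad x₁ x₂ hne h1 h2
  -- limit lemmas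
  have hlimright : ∀ (x : X) (c e : ℝ), c ∈ I → c < e → e ≤ η x → f c x ≤ γ →
      ∃ l, l ∈ Ioo c e ∧ f l x < ρ := by
    intro x c e hcI hce heη hfcγ
    have hsub : Ioo c e ⊆ I := fun l hl => hI.out hcI (hηI x) ⟨hl.1.le, hl.2.le.trans heη⟩
    have hcw : ContinuousWithinAt (fun l => f l x) (Ioo c e) c := ((hflc x) c hcI).mono hsub
    have hev : (fun l => f l x) ⁻¹' Iio ρ ∈ 𝓝[Ioo c e] c :=
      hcw (Iio_mem_nhds (lt_of_le_of_lt hfcγ hγρ))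
    haveI := left_nhdsWithin_Ioo_neBot hce
    obtain ⟨l, hl1, hl2⟩ := Filter.nonempty_of_mem (Filter.inter_mem self_mem_nhdsWithin hev)
    exact ⟨l, hl1, hl2⟩
  have hlimleft : ∀ (x : X) (c e : ℝ), c ∈ I → e < c → η x ≤ e → f c x ≤ γ →
      ∃ l, l ∈ Ioo e c ∧ f l x < ρ := by
    intro x c e hcI hec hηe hfcγ
    have hsub : Ioo e c ⊆ I := fun l hl => hI.out (hηI x) hcI ⟨hηe.trans hl.1.le, hl.2.le⟩
    have hcw : ContinuousWithinAt (fun l => f l x) (Ioo e c) c := ((hflc x) c hcI).mono hsub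
    have hev : (fun l => f l x) ⁻¹' Iio ρ ∈ 𝓝[Ioo e c] c :=
      hcw (Iio_mem_nhds (lt_of_le_of_lt hfcγ hγρ))
    haveI := right_nhdsWithin_Ioo_neBot hec
    obtain ⟨l, hl1, hl2⟩ := Filter.nonempty_of_mem (Filter.inter_mem self_mem_nhdsWithin hev)
    exact ⟨l, hl1, hl2⟩
  have hlimvalL : ∀ (x : X) (c d : ℝ), c ∈ I → d ∈ I → c < d →
      (∀ l ∈ Ioo c d, f l x ≤ γ) → f c x ≤ γ := by
    intro x c d hcI hdI hcd hall
    have hcw : ContinuousWithinAt (fun l => f l x) (Ioo c d) c :=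
      ((hflc x) c hcI).mono (hIooI c d hcI hdI)
    haveI := left_nhdsWithin_Ioo_neBot hcd
    exact le_of_tendsto hcw (Filter.eventually_of_mem self_mem_nhdsWithin hall)
  have hlimvalR : ∀ (x : X) (c d : ℝ), c ∈ I → d ∈ I → d < c →
      (∀ l ∈ Ioo d c, f l x ≤ γ) → f c x ≤ γ := by
    intro x c d hcI hdI hdc hall
    have hcw : ContinuousWithinAt (fun l => f l x) (Ioo d c) c :=
      ((hflc x) c hcI).mono (hIooI d c hdI hcI)
    haveI := right_nhdsWithin_Ioo_neBot hdc
    exact le_of_tendsto hcw (Filter.eventually_of_mem self_mem_nhdsWithin hall)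
  -- construction of x⁻ and x⁺
  have hwitm : ∀ l ∈ I, l ∉ P → ∀ l' ∈ I, l' ≤ l → f l' (xmin l) ≤ γ := by
    intro l hlI hlP l' hl'I hle
    have h1 : f l (xmin l) < ρ := lt_of_le_of_lt (hmγ l hlI) hγρ
    have h2 : η (xmin l) ≠ l := fun he =>
      absurd (hδF (xmin l)) (by rw [he]; exact not_lt.mpr h1.le)
    have h3 : l < η (xmin l) := by
      rcases lt_or_gt_of_ne h2 with h | h
      · exact absurd (⟨hlI, xmin l, h1, h⟩ : l ∈ P) hlP
      · exact h
    exact le_trans (hmonole (xmin l) l' hl'I l hlI hle h3.le) (hmγ l hlI)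
  have hwitp : ∀ l ∈ I, l ∉ N → ∀ l' ∈ I, l ≤ l' → f l' (xmin l) ≤ γ := by
    intro l hlI hlN l' hl'I hle
    have h1 : f l (xmin l) < ρ := lt_of_le_of_lt (hmγ l hlI) hγρ
    have h2 : η (xmin l) ≠ l := fun he =>
      absurd (hδF (xmin l)) (by rw [he]; exact not_lt.mpr h1.le)
    have h3 : η (xmin l) < l := by
      rcases lt_or_gt_of_ne h2 with h | h
      · exact h
      · exact absurd (⟨hlI, xmin l, h1, h⟩ : l ∈ N) hlN
    exact le_trans (hantile (xmin l) l hlI l' hl'I hle h3.le) (hmγ l hlI)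
  have hxminus : ∀ t₀, t₀ ∈ I → t₀ ∉ P → ∃ xm : X, ∀ l ∈ I, l ∉ P → f l xm ≤ γ := by
    intro t₀ ht₀I ht₀P
    haveI : Nonempty {l : ℝ // l ∈ I ∧ l ∉ P} := ⟨⟨t₀, ht₀I, ht₀P⟩⟩
    set E : {l : ℝ // l ∈ I ∧ l ∉ P} → Set X :=
      fun q => {x : X | ∀ l' ∈ I, l' ≤ q.1 → f l' x ≤ γ} with hEdef
    have hEeq : ∀ q, E q = ⋂ p : {l' : ℝ // l' ∈ I ∧ l' ≤ q.1}, {x : X | f p.1 x ≤ γ} := by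
      intro q; ext x
      simp only [hEdef, mem_setOf_eq, mem_iInter, Subtype.forall]
      exact ⟨fun h l' hl' => h l' hl'.1 hl'.2, fun h l' h1 h2 => h l' ⟨h1, h2⟩⟩
    have hEcl : ∀ q, IsClosed (E q) := by
      intro q; rw [hEeq]
      exact isClosed_iInter fun p => isClosed_le (hfc p.1) continuous_const
    have hEcpt : ∀ q, IsCompact (E q) := fun q =>
      IsCompact.of_isClosed_subset (hinfcpt q.1 q.2.1 γ) (hEcl q)
        fun x hx => hx q.1 q.2.1 le_rfl
    have hEne : ∀ q, (E q).Nonempty := fun q =>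
      ⟨xmin q.1, fun l' hl' hle => hwitm q.1 q.2.1 q.2.2 l' hl' hle⟩
    have hdir : Directed (· ⊇ ·) E := by
      intro q₁ q₂
      rcases le_total q₁.1 q₂.1 with h | h
      · exact ⟨q₂, fun x hx l' hl' hle => hx l' hl' (hle.trans h), fun x hx => hx⟩
      · exact ⟨q₁, fun x hx => hx, fun x hx l' hl' hle => hx l' hl' (hle.trans h)⟩
    obtain ⟨xm, hxm⟩ :=
      IsCompact.nonempty_iInter_of_directed_nonempty_isCompact_isClosed E hdir hEne hEcpt hEcl
    rw [mem_iInter] at hxm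
    exact ⟨xm, fun l hlI hlP => hxm ⟨l, hlI, hlP⟩ l hlI le_rfl⟩
  have hxplus : ∀ t₀, t₀ ∈ I → t₀ ∉ N → ∃ xp : X, ∀ l ∈ I, l ∉ N → f l xp ≤ γ := by
    intro t₀ ht₀I ht₀N
    haveI : Nonempty {l : ℝ // l ∈ I ∧ l ∉ N} := ⟨⟨t₀, ht₀I, ht₀N⟩⟩
    set E : {l : ℝ // l ∈ I ∧ l ∉ N} → Set X :=
      fun q => {x : X | ∀ l' ∈ I, q.1 ≤ l' → f l' x ≤ γ} with hEdef
    have hEeq : ∀ q, E q = ⋂ p : {l' : ℝ // l' ∈ I ∧ q.1 ≤ l'}, {x : X | f p.1 x ≤ γ} := by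
      intro q; ext x
      simp only [hEdef, mem_setOf_eq, mem_iInter, Subtype.forall]
      exact ⟨fun h l' hl' => h l' hl'.1 hl'.2, fun h l' h1 h2 => h l' ⟨h1, h2⟩⟩
    have hEcl : ∀ q, IsClosed (E q) := by
      intro q; rw [hEeq]
      exact isClosed_iInter fun p => isClosed_le (hfc p.1) continuous_const
    have hEcpt : ∀ q, IsCompact (E q) := fun q =>
      IsCompact.of_isClosed_subset (hinfcpt q.1 q.2.1 γ) (hEcl q)
        fun x hx => hx q.1 q.2.1 le_rfl
    have hEne : ∀ q, (E q).Nonempty := fun q =>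
      ⟨xmin q.1, fun l' hl' hle => hwitp q.1 q.2.1 q.2.2 l' hl' hle⟩
    have hdir : Directed (· ⊇ ·) E := by
      intro q₁ q₂
      rcases le_total q₁.1 q₂.1 with h | h
      · exact ⟨q₁, fun x hx => hx, fun x hx l' hl' hle => hx l' hl' (h.trans hle)⟩
      · exact ⟨q₂, fun x hx l' hl' hle => hx l' hl' (h.trans hle), fun x hx => hx⟩
    obtain ⟨xp, hxp⟩ :=
      IsCompact.nonempty_iInter_of_directed_nonempty_isCompact_isClosed E hdir hEne hEcpt hEcl
    rw [mem_iInter] at hxp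
    exact ⟨xp, fun l hlI hlN => hxp ⟨l, hlI, hlN⟩ l hlI le_rfl⟩
  have hηP : ∀ xm : X, (∀ l ∈ I, l ∉ P → f l xm ≤ γ) → η xm ∈ P := by
    intro xm hxm
    by_contra h
    exact absurd (hxm (η xm) (hηI xm) h) (not_le.mpr (hFγ xm))
  have hηN : ∀ xp : X, (∀ l ∈ I, l ∉ N → f l xp ≤ γ) → η xp ∈ N := by
    intro xp hxp
    by_contra h
    exact absurd (hxp (η xp) (hηI xp) h) (not_le.mpr (hFγ xp))
  -- ENDGAME
  by_cases hTP : ∃ t, t ∈ I ∧ t ∉ P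
  · by_cases hTN : ∃ s, s ∈ I ∧ s ∉ N
    · -- both complements nonempty
      obtain ⟨t₀, ht₀I, ht₀P⟩ := hTP
      obtain ⟨s₀, hs₀I, hs₀N⟩ := hTN
      obtain ⟨xm, hxm⟩ := hxminus t₀ ht₀I ht₀P
      obtain ⟨xp, hxp⟩ := hxplus s₀ hs₀I hs₀N
      have hηmP : η xm ∈ P := hηP xm hxm
      have hηpN : η xp ∈ N := hηN xp hxp
      have hTub : ∀ t, t ∈ I → t ∉ P → t < η xm := fun t htI htP =>
        lt_of_not_ge fun h => htP (hPup (η xm) hηmP t htI h)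
      have hbdd : BddAbove {l : ℝ | l ∈ I ∧ l ∉ P} :=
        ⟨η xm, fun t ht => (hTub t ht.1 ht.2).le⟩
      set c := sSup {l : ℝ | l ∈ I ∧ l ∉ P} with hcdef
      have hTne : {l : ℝ | l ∈ I ∧ l ∉ P}.Nonempty := ⟨t₀, ht₀I, ht₀P⟩
      have ht₀c : t₀ ≤ c := le_csSup hbdd ⟨ht₀I, ht₀P⟩
      have hcη : c ≤ η xm := csSup_le hTne fun t ht => (hTub t ht.1 ht.2).le
      have hcI : c ∈ I := hI.out ht₀I (hηI xm) ⟨ht₀c, hcη⟩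
      have hTdown : ∀ l, l ∈ I → l < c → l ∉ P := by
        intro l hlI hlc hlP
        obtain ⟨t, ht, hlt⟩ := exists_lt_of_lt_csSup hTne hlc
        exact ht.2 (hPup l hlP t ht.1 hlt.le)
      have hPright : ∀ l, l ∈ I → c < l → l ∈ P := by
        intro l hlI hcl
        by_contra h
        exact absurd (le_csSup hbdd ⟨hlI, h⟩) (not_le.mpr hcl)
      rcases eq_or_lt_of_le hcη with hceq | hclt
      · -- c = η xm
        by_cases hd : ∃ d, d ∈ I ∧ d < c
        · obtain ⟨d, hdI, hdc⟩ := hd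
          have hcγ : f c xm ≤ γ := hlimvalR xm c d hcI hdI hdc fun l hl =>
            hxm l (hIooI d c hdI hcI hl) (hTdown l (hIooI d c hdI hcI hl) hl.2)
          rw [hceq] at hcγ
          exact absurd hcγ (not_le.mpr (hFγ xm))
        · push_neg at hd
          have h2 : t₀ = c := le_antisymm ht₀c (hd t₀ ht₀I)
          exact ht₀P (by rw [h2, hceq]; exact hηmP)
      · -- c < η xm
        by_cases hcP : c ∈ P
        · -- switch to the plus side
          have hSlb : ∀ s, s ∈ I → s ∉ N → η xp < s := fun s hsI hsN =>
            lt_of_not_ge fun h => hsN (hNdown (η xp) hηpN s hsI h)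
          have hbddb : BddBelow {l : ℝ | l ∈ I ∧ l ∉ N} :=
            ⟨η xp, fun s hs => (hSlb s hs.1 hs.2).le⟩
          set c' := sInf {l : ℝ | l ∈ I ∧ l ∉ N} with hc'def
          have hSne : {l : ℝ | l ∈ I ∧ l ∉ N}.Nonempty := ⟨s₀, hs₀I, hs₀N⟩
          have hs₀c' : c' ≤ s₀ := csInf_le hbddb ⟨hs₀I, hs₀N⟩
          have hc'η : η xp ≤ c' := le_csInf hSne fun s hs => (hSlb s hs.1 hs.2).le
          have hc'I : c' ∈ I := hI.out (hηI xp) hs₀I ⟨hc'η, hs₀c'⟩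
          have hSup : ∀ l, l ∈ I → c' < l → l ∉ N := by
            intro l hlI hc'l hlN
            obtain ⟨s, hs, hsl⟩ := exists_lt_of_csInf_lt hSne hc'l
            exact hs.2 (hNdown l hlN s hs.1 hsl.le)
          have hNleft : ∀ l, l ∈ I → l < c' → l ∈ N := by
            intro l hlI hlc'
            by_contra h
            exact absurd (csInf_le hbddb ⟨hlI, h⟩) (not_le.mpr hlc')
          rcases eq_or_lt_of_le hc'η with hc'eq | hc'lt
          · -- η xp = c'
            by_cases hd : ∃ d, d ∈ I ∧ c' < d
            · obtain ⟨d, hdI, hdc⟩ := hd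
              have hcγ : f c' xp ≤ γ := hlimvalL xp c' d hc'I hdI hdc fun l hl =>
                hxp l (hIooI c' d hc'I hdI hl) (hSup l (hIooI c' d hc'I hdI hl) hl.1)
              rw [← hc'eq] at hcγ
              exact absurd hcγ (not_le.mpr (hFγ xp))
            · push_neg at hd
              have h2 : s₀ = c' := le_antisymm (hd s₀ hs₀I) hs₀c'
              exact hs₀N (by rw [h2, ← hc'eq]; exact hηpN)
          · -- η xp < c'
            by_cases hc'N : c' ∈ N
            · rcases lt_trichotomy c c' with hcc | hcc | hcc
              · -- c < c' : two interior points lie in P ∩ N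
                set u := (2 * c + c') / 3 with hu
                set v := (c + 2 * c') / 3 with hv
                have hcu : c < u := by rw [hu]; linarith
                have huv : u < v := by rw [hu, hv]; linarith
                have hvc' : v < c' := by rw [hv]; linarith
                have huI : u ∈ I := hI.out hcI hc'I ⟨hcu.le, (huv.trans hvc').le⟩
                have hvI : v ∈ I := hI.out hcI hc'I ⟨(hcu.trans huv).le, hvc'.le⟩
                exact hnoIoo u v huv (hPright u huI hcu) (hNleft u huI (huv.trans hvc'))
                  (hPright v hvI (hcu.trans huv)) (hNleft v hvI hvc')
              · -- c = c'
                by_cases hd : ∃ d, d ∈ I ∧ d < c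
                · obtain ⟨d, hdI, hdc⟩ := hd
                  have hcγ : f c xm ≤ γ := hlimvalR xm c d hcI hdI hdc fun l hl =>
                    hxm l (hIooI d c hdI hcI hl) (hTdown l (hIooI d c hdI hcI hl) hl.2)
                  obtain ⟨l₁, hl₁mem, hl₁ρ⟩ := hlimright xm c (η xm) hcI hclt le_rfl hcγ
                  have hl₁I : l₁ ∈ I := hIooI c (η xm) hcI (hηI xm) hl₁mem
                  have hl₁N : l₁ ∈ N := ⟨hl₁I, xm, hl₁ρ, hl₁mem.2⟩
                  exact (hSup l₁ hl₁I (hcc ▸ hl₁mem.1)) hl₁N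
                · push_neg at hd
                  have h2 : t₀ = c := le_antisymm ht₀c (hd t₀ ht₀I)
                  exact ht₀P (by rw [h2]; exact hcP)
              · -- c' < c : the midpoint is in neither P nor N
                set w := (c' + c) / 2 with hw
                have hc'w : c' < w := by rw [hw]; linarith
                have hwc : w < c := by rw [hw]; linarith
                have hwI : w ∈ I := hI.out hc'I hcI ⟨hc'w.le, hwc.le⟩
                rcases hPN w hwI with h | h
                · exact (hTdown w hwI hwc) h
                · exact (hSup w hwI hc'w) h
            · -- c' ∉ N
              have hcγ : f c' xp ≤ γ := hxp c' hc'I hc'N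
              obtain ⟨l₁, hl₁mem, hl₁ρ⟩ := hlimleft xp c' (η xp) hc'I hc'lt le_rfl hcγ
              obtain ⟨l₂, hl₂mem, hl₂ρ⟩ := hlimleft xp c' l₁ hc'I hl₁mem.2 hl₁mem.1.le hcγ
              have hl₁I : l₁ ∈ I := hIooI (η xp) c' (hηI xp) hc'I hl₁mem
              have hl₂I : l₂ ∈ I := hIooI l₁ c' hl₁I hc'I hl₂mem
              have hl₁P : l₁ ∈ P := ⟨hl₁I, xp, hl₁ρ, hl₁mem.1⟩
              have hl₂P : l₂ ∈ P := ⟨hl₂I, xp, hl₂ρ, lt_trans hl₁mem.1 hl₂mem.1⟩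
              have hl₁N : l₁ ∈ N := hNleft l₁ hl₁I hl₁mem.2
              have hl₂N : l₂ ∈ N := hNleft l₂ hl₂I hl₂mem.2
              exact hnoIoo l₁ l₂ hl₂mem.1 hl₁P hl₁N hl₂P hl₂N
        · -- c ∉ P
          have hcγ : f c xm ≤ γ := hxm c hcI hcP
          obtain ⟨l₁, hl₁mem, hl₁ρ⟩ := hlimright xm c (η xm) hcI hclt le_rfl hcγ
          obtain ⟨l₂, hl₂mem, hl₂ρ⟩ := hlimright xm c l₁ hcI hl₁mem.1 hl₁mem.2.le hcγ
          have hl₁I : l₁ ∈ I := hIooI c (η xm) hcI (hηI xm) hl₁mem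
          have hl₂I : l₂ ∈ I := hIooI c l₁ hcI hl₁I hl₂mem
          have hl₁P : l₁ ∈ P := hPright l₁ hl₁I hl₁mem.1
          have hl₂P : l₂ ∈ P := hPright l₂ hl₂I hl₂mem.1
          have hl₁N : l₁ ∈ N := ⟨hl₁I, xm, hl₁ρ, hl₁mem.2⟩
          have hl₂N : l₂ ∈ N := ⟨hl₂I, xm, hl₂ρ, lt_trans hl₂mem.2 hl₁mem.2⟩
          exact hnoIoo l₂ l₁ hl₂mem.2 hl₂P hl₂N hl₁P hl₁N
    · -- every point of I is in N
      push_neg at hTN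
      by_cases hPp : ∃ p q, p ∈ P ∧ q ∈ I ∧ p < q
      · obtain ⟨p, q, hpP, hqI, hpq⟩ := hPp
        exact hnoIoo p q hpq hpP (hTN p hpP.1) (hPup p hpP q hqI hpq.le) (hTN q hqI)
      · push_neg at hPp
        by_cases hPe : ∃ p, p ∈ P
        · obtain ⟨p, hpP⟩ := hPe
          by_cases hd : ∃ d, d ∈ I ∧ d < p
          · obtain ⟨d, hdI, hdp⟩ := hd
            have hdP : d ∉ P := fun h => absurd (hPp d p h hpP.1) (not_le.mpr hdp)
            obtain ⟨xm, hxm⟩ := hxminus d hdI hdP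
            have hηmP : η xm ∈ P := hηP xm hxm
            have hall : ∀ l, l ∈ I → l < η xm → f l xm ≤ γ := fun l hlI hlη =>
              hxm l hlI fun h => absurd (hPp l (η xm) h (hηI xm)) (not_le.mpr hlη)
            have hdη : d < η xm := lt_of_not_ge fun h => hdP (hPup (η xm) hηmP d hdI h)
            have hcγ : f (η xm) xm ≤ γ := hlimvalR xm (η xm) d (hηI xm) hdI hdη fun l hl =>
              hall l (hIooI d (η xm) hdI (hηI xm) hl) hl.2
            exact absurd hcγ (not_le.mpr (hFγ xm))
          · push_neg at hd
            obtain ⟨-, x, -, hηx⟩ := hpP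
            exact absurd (hd (η x) (hηI x)) (not_le.mpr hηx)
        · push_neg at hPe
          obtain ⟨t₁, ht₁I⟩ := hInonempty
          obtain ⟨xm, hxm⟩ := hxminus t₁ ht₁I (hPe t₁)
          exact absurd (hxm (η xm) (hηI xm) (hPe (η xm))) (not_le.mpr (hFγ xm))
  · -- every point of I is in P
    push_neg at hTP
    by_cases hNn : ∃ n q, n ∈ N ∧ q ∈ I ∧ q < n
    · obtain ⟨n, q, hnN, hqI, hqn⟩ := hNn
      exact hnoIoo q n hqn (hTP q hqI) (hNdown n hnN q hqI hqn.le) (hTP n hnN.1) hnN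
    · push_neg at hNn
      by_cases hNe : ∃ n, n ∈ N
      · obtain ⟨n, hnN⟩ := hNe
        by_cases hd : ∃ d, d ∈ I ∧ n < d
        · obtain ⟨d, hdI, hnd⟩ := hd
          have hdN : d ∉ N := fun h => absurd (hNn d n h hnN.1) (not_le.mpr hnd)
          obtain ⟨xp, hxp⟩ := hxplus d hdI hdN
          have hηpN : η xp ∈ N := hηN xp hxp
          have hall : ∀ l, l ∈ I → η xp < l → f l xp ≤ γ := fun l hlI hηl =>
            hxp l hlI fun h => absurd (hNn l (η xp) h (hηI xp)) (not_le.mpr hηl)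
          have hηd : η xp < d := lt_of_not_ge fun h => hdN (hNdown (η xp) hηpN d hdI h)
          have hcγ : f (η xp) xp ≤ γ := hlimvalL xp (η xp) d (hηI xp) hdI hηd fun l hl =>
            hall l (hIooI (η xp) d (hηI xp) hdI hl) hl.1
          exact absurd hcγ (not_le.mpr (hFγ xp))
        · push_neg at hd
          obtain ⟨-, x, -, hηx⟩ := hnN
          exact absurd (hd (η x) (hηI x)) (not_le.mpr hηx)
      · push_neg at hNe
        obtain ⟨t₁, ht₁I⟩ := hInonempty
        obtain ⟨xp, hxp⟩ := hxplus t₁ ht₁I (hNe t₁)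
        exact absurd (hxp (η xp) (hηI xp) (hNe (η xp))) (not_le.mpr (hFγ xp))

/-- Theorem 3.1 (alternative theorem): under (i₂') and (i₃') or (i₄'), with X
Hausdorff, all slice functions inf-compact, ψ never vanishing and sup-compactness
at some x₀, either the infimum is attained with the explicit coefficients, or
there is a nonempty open interval J ⊆ I on which every slice function has at
least two local minima. -/
theorem stmt5
    {X : Type*} [TopologicalSpace X] [T2Space X]
    (I : Set ℝ) (hI : I.OrdConnected) (hInonempty : I.Nonempty)
    (φ ψ ω : X → ℝ) (α β α' β' : ℝ → ℝ)
    (hφ : Continuous φ) (hψ : Continuous ψ) (hω : Continuous ω)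
    (hα : ContinuousOn α I) (hβ : ContinuousOn β I)
    -- (i₂')
    (A : Set ℝ) (hIA : interior I ⊆ A) (hAI : A ⊆ I)
    (hα' : ∀ l ∈ A, HasDerivWithinAt α (α' l) I l)
    (hβ' : ∀ l ∈ A, HasDerivWithinAt β (β' l) I l)
    (hα'0 : ∀ l ∈ A, α' l ≠ 0)
    (g : ℝ → ℝ) (hg : ∀ l ∈ A, g l = β' l / α' l)
    (hrange : ∀ x : X, ψ x ≠ 0 → -(φ x / ψ x) ∈ g '' A)
    (ginv : ℝ → ℝ)
    (hginv : ∀ μ ∈ g '' A, ginv μ ∈ A ∧ g (ginv μ) = μ)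
    -- (i₃') or (i₄')
    (hcase :
      (StrictMonoOn g A ∧
        ∀ l ∈ A, ∀ x : X, ψ x ≠ 0 → α' l * ψ x < 0) ∨
      (StrictAntiOn g A ∧
        ∀ l ∈ A, ∀ x : X, ψ x ≠ 0 → 0 < α' l * ψ x))
    -- every slice function is inf-compact
    (hinfcpt : ∀ l ∈ I, ∀ r : ℝ,
      IsCompact {x : X | α l * φ x + β l * ψ x + ω x ≤ r})
    -- ψ never vanishes
    (hψ0 : ∀ x : X, ψ x ≠ 0)
    -- for some x₀, λ ↦ α(λ)φ(x₀)+β(λ)ψ(x₀) is sup-compact on I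
    (hsupcpt : ∃ x₀ : X, ∀ r : ℝ,
      IsCompact {l : ℝ | l ∈ I ∧ r ≤ α l * φ x₀ + β l * ψ x₀}) :
    (∃ xt : X, ∀ x : X,
      α (ginv (-(φ xt / ψ xt))) * φ xt + β (ginv (-(φ xt / ψ xt))) * ψ xt + ω xt ≤
      α (ginv (-(φ xt / ψ xt))) * φ x + β (ginv (-(φ xt / ψ xt))) * ψ x + ω x) ∨
    (∃ u v : ℝ, u < v ∧ Ioo u v ⊆ I ∧ ∀ l ∈ Ioo u v,
      ∃ x₁ x₂ : X, x₁ ≠ x₂ ∧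
        IsLocalMin (fun x => α l * φ x + β l * ψ x + ω x) x₁ ∧
        IsLocalMin (fun x => α l * φ x + β l * ψ x + ω x) x₂) := by
  obtain ⟨x₀, hx₀⟩ := hsupcpt
  have hηmem : ∀ x : X, ginv (-(φ x / ψ x)) ∈ A ∧ g (ginv (-(φ x / ψ x))) = -(φ x / ψ x) :=
    fun x => hginv _ (hrange x (hψ0 x))
  have hηI : ∀ x : X, ginv (-(φ x / ψ x)) ∈ I := fun x => hAI (hηmem x).1
  have hIconv : Convex ℝ I := convex_iff_ordConnected.mpr hI
  have hφeq : ∀ x : X, φ x = -g (ginv (-(φ x / ψ x))) * ψ x := by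
    intro x
    rw [(hηmem x).2]
    field_simp [hψ0 x]
  -- derivative of the slice in l
  have hderiv : ∀ (x : X), ∀ l ∈ interior I,
      HasDerivAt (fun l => α l * φ x + β l * ψ x + ω x)
        (α' l * ψ x * (g l - g (ginv (-(φ x / ψ x))))) l := by
    intro x l hl
    have hlA : l ∈ A := hIA hl
    have hInhds : I ∈ 𝓝 l := mem_interior_iff_mem_nhds.mp hl
    have hda : HasDerivAt α (α' l) l := (hα' l hlA).hasDerivAt hInhds
    have hdb : HasDerivAt β (β' l) l := (hβ' l hlA).hasDerivAt hInhds
    have h1 : HasDerivAt (fun l => α l * φ x + β l * ψ x + ω x)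
        (α' l * φ x + β' l * ψ x) l :=
      ((hda.mul_const (φ x)).add (hdb.mul_const (ψ x))).add_const (ω x)
    convert h1 using 1
    have hb' : β' l = g l * α' l := by
      rw [hg l hlA]
      field_simp [hα'0 l hlA]
    have hpx := hφeq x
    set gv := g (ginv (-(φ x / ψ x))) with hgv
    rw [hb', hpx]
    ring
  have hflc : ∀ x : X, ContinuousOn (fun l => α l * φ x + β l * ψ x + ω x) I := fun x =>
    ((hα.mul continuousOn_const).add (hβ.mul continuousOn_const)).add continuousOn_const
  -- strict monotonicity up to the peak
  have hmono : ∀ x : X, StrictMonoOn (fun l => α l * φ x + β l * ψ x + ω x)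
      (I ∩ Iic (ginv (-(φ x / ψ x)))) := by
    intro x
    refine strictMonoOn_of_deriv_pos (hIconv.inter (convex_Iic _))
      ((hflc x).mono inter_subset_left) ?_
    intro l hl
    rw [interior_inter, interior_Iic] at hl
    rw [(hderiv x l hl.1).deriv]
    have hlA : l ∈ A := hIA hl.1
    have hηA : ginv (-(φ x / ψ x)) ∈ A := (hηmem x).1
    have hlη : l < ginv (-(φ x / ψ x)) := hl.2
    rcases hcase with ⟨hgm, hneg⟩ | ⟨hgm, hpos⟩
    · have h1 : g l < g (ginv (-(φ x / ψ x))) := hgm hlA hηA hlη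
      have h2 : α' l * ψ x < 0 := hneg l hlA x (hψ0 x)
      nlinarith
    · have h1 : g (ginv (-(φ x / ψ x))) < g l := hgm hlA hηA hlη
      have h2 : 0 < α' l * ψ x := hpos l hlA x (hψ0 x)
      nlinarith
  -- strict antitonicity after the peak
  have hanti : ∀ x : X, StrictAntiOn (fun l => α l * φ x + β l * ψ x + ω x)
      (I ∩ Ici (ginv (-(φ x / ψ x)))) := by
    intro x
    refine strictAntiOn_of_deriv_neg (hIconv.inter (convex_Ici _))
      ((hflc x).mono inter_subset_left) ?_
    intro l hl
    rw [interior_inter, interior_Ici] at hl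
    rw [(hderiv x l hl.1).deriv]
    have hlA : l ∈ A := hIA hl.1
    have hηA : ginv (-(φ x / ψ x)) ∈ A := (hηmem x).1
    have hlη : ginv (-(φ x / ψ x)) < l := hl.2
    rcases hcase with ⟨hgm, hneg⟩ | ⟨hgm, hpos⟩
    · have h1 : g (ginv (-(φ x / ψ x))) < g l := hgm hηA hlA hlη
      have h2 : α' l * ψ x < 0 := hneg l hlA x (hψ0 x)
      nlinarith
    · have h1 : g l < g (ginv (-(φ x / ψ x))) := hgm hηA hlA hlη
      have h2 : 0 < α' l * ψ x := hpos l hlA x (hψ0 x)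
      nlinarith
  -- sup-compactness with the ω-shift
  have hsup' : ∀ r : ℝ,
      IsCompact {l : ℝ | l ∈ I ∧ r ≤ α l * φ x₀ + β l * ψ x₀ + ω x₀} := by
    intro r
    have heq : {l : ℝ | l ∈ I ∧ r ≤ α l * φ x₀ + β l * ψ x₀ + ω x₀}
        = {l : ℝ | l ∈ I ∧ r - ω x₀ ≤ α l * φ x₀ + β l * ψ x₀} := by
      ext l
      constructor
      · rintro ⟨h1, h2⟩; exact ⟨h1, by linarith⟩
      · rintro ⟨h1, h2⟩; exact ⟨h1, by linarith⟩
    rw [heq]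
    exact hx₀ _
  exact stmt5_aux I hI hInonempty
    (fun l x => α l * φ x + β l * ψ x + ω x)
    (fun x => ginv (-(φ x / ψ x)))
    hηI
    (fun l => ((continuous_const.mul hφ).add (continuous_const.mul hψ)).add hω)
    hflc hmono hanti hinfcpt x₀ hsup'
end

section
/- Let X be a topological space and φ, ψ, ω : X → ℝ continuous functions with ψ(x) ≥ 0 for all x ∈ X. Let c, d ∈ ℝ be such that the set { λ ∈ [−π/2, π/2] : the function x ↦ (sin λ + c)φ(x) + (cos λ + d)ψ(x) + ω(x) is inf-connected } is dense in [−π/2, π/2]. Then inf_{x∈X} ( cφ(x) + dψ(x) + √(φ(x)² + ψ(x)²) + ω(x) ) = sup_{λ∈[−π/2,π/2]} inf_{x∈X} ( (sin λ + c)φ(x) + (cos λ + d)ψ(x) + ω(x) ). -/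
open Set Filter Real

private lemma sin_quasi {t1 t t2 : ℝ} (h1 : -(π/2) ≤ t1) (h12 : t1 ≤ t) (h23 : t ≤ t2)
    (h2 : t2 ≤ π/2 + π) : Real.sin t1 ≤ Real.sin t ∨ Real.sin t2 ≤ Real.sin t := by
  rcases le_or_gt t (π/2) with ht | ht
  · left
    exact Real.strictMonoOn_sin.monotoneOn ⟨h1, le_trans h12 ht⟩ ⟨le_trans h1 h12, ht⟩ h12
  · right
    have e : ∀ u : ℝ, Real.sin u = Real.cos (u - π/2) := by
      intro u; rw [Real.cos_sub]; simp
    rw [e t, e t2]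
    exact Real.strictAntiOn_cos.antitoneOn (a := t - π/2) (b := t2 - π/2)
      ⟨by linarith, by linarith⟩ ⟨by linarith, by linarith⟩ (by linarith)

private lemma quasi {a b : ℝ} (hb : 0 ≤ b) {μ1 l μ2 : ℝ} (h1 : -(π/2) ≤ μ1)
    (h12 : μ1 ≤ l) (h23 : l ≤ μ2) (h2 : μ2 ≤ π/2) :
    a * Real.sin μ1 + b * Real.cos μ1 ≤ a * Real.sin l + b * Real.cos l ∨
    a * Real.sin μ2 + b * Real.cos μ2 ≤ a * Real.sin l + b * Real.cos l := by
  by_cases h0 : a = 0 ∧ b = 0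
  · left; simp [h0.1, h0.2]
  have hρ2 : 0 < a^2 + b^2 := by
    rcases not_and_or.mp h0 with h | h
    · have : 0 < a^2 := lt_of_le_of_ne (sq_nonneg a) (Ne.symm (pow_ne_zero 2 h))
      nlinarith [sq_nonneg b]
    · have : 0 < b^2 := lt_of_le_of_ne (sq_nonneg b) (Ne.symm (pow_ne_zero 2 h))
      nlinarith [sq_nonneg a]
  set ρ := Real.sqrt (a^2+b^2) with hρdef
  have hρ : 0 < ρ := Real.sqrt_pos.mpr hρ2
  have hρsq : ρ^2 = a^2 + b^2 := Real.sq_sqrt hρ2.le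
  have hba : |a| ≤ ρ := by
    rw [← Real.sqrt_sq_eq_abs]; exact Real.sqrt_le_sqrt (by nlinarith [sq_nonneg b])
  have hd1 : -1 ≤ a / ρ := by
    rw [le_div_iff₀ hρ]; have := abs_le.mp hba; linarith [this.1]
  have hd2 : a / ρ ≤ 1 := by
    rw [div_le_one hρ]; have := abs_le.mp hba; linarith [this.2]
  set α := Real.arccos (a / ρ) with hα
  have hcos : Real.cos α = a / ρ := Real.cos_arccos hd1 hd2
  have hsin : Real.sin α = b / ρ := by
    rw [hα, Real.sin_arccos]
    have e1 : 1 - (a/ρ)^2 = (b/ρ)^2 := by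
      field_simp; nlinarith [hρsq]
    rw [e1, Real.sqrt_sq (by positivity)]
  have hα0 : 0 ≤ α := Real.arccos_nonneg _
  have hαπ : α ≤ π := Real.arccos_le_pi _
  have key : ∀ μ : ℝ, a * Real.sin μ + b * Real.cos μ = ρ * Real.sin (μ + α) := by
    intro μ
    rw [Real.sin_add, hcos, hsin]
    field_simp
  rw [key, key, key]
  rcases sin_quasi (t1 := μ1 + α) (t := l + α) (t2 := μ2 + α)
    (by linarith) (by linarith) (by linarith) (by linarith) with h | h
  · exact Or.inl (mul_le_mul_of_nonneg_left h hρ.le)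
  · exact Or.inr (mul_le_mul_of_nonneg_left h hρ.le)

private lemma attain {a b : ℝ} (hb : 0 ≤ b) :
    ∃ μ ∈ Icc (-(π/2)) (π/2), Real.sin μ * a + Real.cos μ * b = Real.sqrt (a^2 + b^2) := by
  by_cases h0 : a = 0 ∧ b = 0
  · refine ⟨0, ⟨by linarith [Real.pi_pos], by linarith [Real.pi_pos]⟩, ?_⟩
    simp [h0.1, h0.2]
  have hρ2 : 0 < a^2 + b^2 := by
    rcases not_and_or.mp h0 with h | h
    · have : 0 < a^2 := lt_of_le_of_ne (sq_nonneg a) (Ne.symm (pow_ne_zero 2 h))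
      nlinarith [sq_nonneg b]
    · have : 0 < b^2 := lt_of_le_of_ne (sq_nonneg b) (Ne.symm (pow_ne_zero 2 h))
      nlinarith [sq_nonneg a]
  set ρ := Real.sqrt (a^2+b^2) with hρdef
  have hρ : 0 < ρ := Real.sqrt_pos.mpr hρ2
  have hρsq : ρ^2 = a^2 + b^2 := Real.sq_sqrt hρ2.le
  have hba : |a| ≤ ρ := by
    rw [← Real.sqrt_sq_eq_abs]; exact Real.sqrt_le_sqrt (by nlinarith [sq_nonneg b])
  have hd1 : -1 ≤ a / ρ := by
    rw [le_div_iff₀ hρ]; have := abs_le.mp hba; linarith [this.1]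
  have hd2 : a / ρ ≤ 1 := by
    rw [div_le_one hρ]; have := abs_le.mp hba; linarith [this.2]
  refine ⟨Real.arcsin (a / ρ), Real.arcsin_mem_Icc _, ?_⟩
  rw [Real.sin_arcsin hd1 hd2, Real.cos_arcsin]
  have e1 : 1 - (a/ρ)^2 = (b/ρ)^2 := by
    field_simp; nlinarith [hρsq]
  rw [e1, Real.sqrt_sq (by positivity)]
  field_simp
  nlinarith [hρsq]

private lemma cauchy (a b l : ℝ) : Real.sin l * a + Real.cos l * b ≤ Real.sqrt (a^2 + b^2) := by
  have h1 : (Real.sin l * a + Real.cos l * b)^2 ≤ a^2 + b^2 := by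
    nlinarith [Real.sin_sq_add_cos_sq l, sq_nonneg (Real.sin l * b - Real.cos l * a)]
  rcases le_or_gt (Real.sin l * a + Real.cos l * b) 0 with h | h
  · exact le_trans h (Real.sqrt_nonneg _)
  · exact (Real.le_sqrt' h).mpr h1

private lemma openAux {X : Type*} [TopologicalSpace X] (φ ψ ω : X → ℝ)
    (hφ : Continuous φ) (hψ : Continuous ψ) (hω : Continuous ω) (c d r A B : ℝ) (hAB : A ≤ B) :
    IsOpen {x : X | ∀ μ ∈ Icc A B,
      (Real.sin μ + c) * φ x + (Real.cos μ + d) * ψ x + ω x < r} := by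
  rw [isOpen_iff_mem_nhds]
  intro x0 hx0
  have hcont : ContinuousOn
      (fun μ => (Real.sin μ + c) * φ x0 + (Real.cos μ + d) * ψ x0 + ω x0) (Icc A B) := by
    fun_prop
  obtain ⟨μm, hμm, hmax⟩ := (isCompact_Icc).exists_isMaxOn (nonempty_Icc.mpr hAB) hcont
  set s0 := (Real.sin μm + c) * φ x0 + (Real.cos μm + d) * ψ x0 + ω x0 with hs0
  have hs0r : s0 < r := hx0 μm hμm
  set F : X → ℝ := fun x =>
    (1+|c|)*|φ x - φ x0| + (1+|d|)*|ψ x - ψ x0| + |ω x - ω x0| with hF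
  have hFc : Continuous F := by fun_prop
  have hmem : x0 ∈ F ⁻¹' (Iio (r - s0)) := by
    simp only [hF, mem_preimage, mem_Iio]
    simp only [sub_self, abs_zero, mul_zero, add_zero]
    linarith
  apply Filter.mem_of_superset ((isOpen_Iio.preimage hFc).mem_nhds hmem)
  intro x hx μ hμ
  have hFx : F x < r - s0 := hx
  have hFxe : F x = (1+|c|)*|φ x - φ x0| + (1+|d|)*|ψ x - ψ x0| + |ω x - ω x0| := rfl
  have h1 : (Real.sin μ + c) * φ x0 + (Real.cos μ + d) * ψ x0 + ω x0 ≤ s0 := hmax hμ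
  have hsb : |Real.sin μ + c| ≤ 1 + |c| := by
    refine (abs_add_le _ _).trans ?_
    have : |Real.sin μ| ≤ 1 := abs_le.mpr ⟨Real.neg_one_le_sin μ, Real.sin_le_one μ⟩
    linarith
  have hcb : |Real.cos μ + d| ≤ 1 + |d| := by
    refine (abs_add_le _ _).trans ?_
    have : |Real.cos μ| ≤ 1 := abs_le.mpr ⟨Real.neg_one_le_cos μ, Real.cos_le_one μ⟩
    linarith
  have b1 : (Real.sin μ + c) * (φ x - φ x0) ≤ (1+|c|) * |φ x - φ x0| := by
    calc (Real.sin μ + c) * (φ x - φ x0) ≤ |(Real.sin μ + c) * (φ x - φ x0)| := le_abs_self _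
    _ = |Real.sin μ + c| * |φ x - φ x0| := abs_mul _ _
    _ ≤ (1+|c|) * |φ x - φ x0| := mul_le_mul_of_nonneg_right hsb (abs_nonneg _)
  have b2 : (Real.cos μ + d) * (ψ x - ψ x0) ≤ (1+|d|) * |ψ x - ψ x0| := by
    calc (Real.cos μ + d) * (ψ x - ψ x0) ≤ |(Real.cos μ + d) * (ψ x - ψ x0)| := le_abs_self _
    _ = |Real.cos μ + d| * |ψ x - ψ x0| := abs_mul _ _
    _ ≤ (1+|d|) * |ψ x - ψ x0| := mul_le_mul_of_nonneg_right hcb (abs_nonneg _)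
  have b3 : ω x - ω x0 ≤ |ω x - ω x0| := le_abs_self _
  have e : (Real.sin μ + c) * φ x + (Real.cos μ + d) * ψ x + ω x
      = ((Real.sin μ + c) * φ x0 + (Real.cos μ + d) * ψ x0 + ω x0)
        + ((Real.sin μ + c) * (φ x - φ x0) + (Real.cos μ + d) * (ψ x - ψ x0)
          + (ω x - ω x0)) := by ring
  rw [e]
  linarith

private lemma mainContra {X : Type*} [TopologicalSpace X] (G : ℝ → X → ℝ) (r : ℝ)
    (hGc : ∀ x, Continuous fun l => G l x)
    (hopen : ∀ A B : ℝ, A ≤ B → IsOpen {x | ∀ μ ∈ Icc A B, G μ x < r})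
    (hquasi : ∀ x : X, ∀ μ1 l μ2 : ℝ, -(π/2) ≤ μ1 → μ1 ≤ l → l ≤ μ2 → μ2 ≤ π/2 →
      G μ1 x ≤ G l x ∨ G μ2 x ≤ G l x)
    (hattain : ∀ x : X, ∃ μ ∈ Icc (-(π/2)) (π/2), r < G μ x)
    (hdense : Icc (-(π/2)) (π/2) ⊆ closure
      {l : ℝ | l ∈ Icc (-(π/2)) (π/2) ∧ IsPreconnected {x : X | G l x < r}})
    (h1 : ∀ l ∈ Icc (-(π/2)) (π/2), ∃ x, G l x < r) : False := by
  have hK : -(π/2) ≤ (π/2:ℝ) := by linarith [Real.pi_pos]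
  set R : ℝ → Set X := fun l => {x | ∀ μ ∈ Icc (-(π/2)) l, G μ x < r} with hR
  set L : ℝ → Set X := fun l => {x | ∀ μ ∈ Icc l (π/2), G μ x < r} with hL
  have hcover : ∀ l ∈ Icc (-(π/2)) (π/2), ∀ x : X, G l x < r → x ∈ L l ∪ R l := by
    intro l hl x hx
    by_contra hc
    simp only [mem_union, not_or] at hc
    obtain ⟨hcL, hcR⟩ := hc
    simp only [hL, mem_setOf_eq, not_forall, not_lt, exists_prop] at hcL
    simp only [hR, mem_setOf_eq, not_forall, not_lt, exists_prop] at hcR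
    obtain ⟨μ2, hμ2, hg2⟩ := hcL
    obtain ⟨μ1, hμ1, hg1⟩ := hcR
    rcases hquasi x μ1 l μ2 hμ1.1 hμ1.2 hμ2.1 hμ2.2 with h | h <;> linarith
  have hdisj : ∀ l ∈ Icc (-(π/2)) (π/2), ∀ x : X, x ∈ L l → x ∈ R l → False := by
    intro l hl x hxL hxR
    obtain ⟨μ, hμ, hμr⟩ := hattain x
    rcases le_total μ l with h | h
    · exact absurd (hxR μ ⟨hμ.1, h⟩) (by linarith)
    · exact absurd (hxL μ ⟨h, hμ.2⟩) (by linarith)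
  have hRanti : ∀ {l l' : ℝ}, l ≤ l' → R l' ⊆ R l := by
    intro l l' h x hx μ hμ
    exact hx μ ⟨hμ.1, hμ.2.trans h⟩
  set S := {l : ℝ | l ∈ Icc (-(π/2)) (π/2) ∧ (R l).Nonempty} with hS
  have hSne : (-(π/2)) ∈ S := by
    obtain ⟨x, hx⟩ := h1 (-(π/2)) ⟨le_refl _, hK⟩
    refine ⟨⟨le_refl _, hK⟩, ⟨x, ?_⟩⟩
    intro μ hμ
    have : μ = -(π/2) := le_antisymm hμ.2 hμ.1
    rwa [this]
  have hSbdd : BddAbove S := ⟨π/2, fun l hl => hl.1.2⟩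
  set t := sSup S with ht
  have htK : t ∈ Icc (-(π/2)) (π/2) :=
    ⟨le_csSup hSbdd hSne, csSup_le ⟨_, hSne⟩ (fun l hl => hl.1.2)⟩
  obtain ⟨x0, hx0⟩ := h1 t htK
  obtain ⟨μ0, hμ0K, hμ0r⟩ := hattain x0
  rcases hcover t htK x0 hx0 with hx0L | hx0R
  · -- x0 ∈ L t : density case
    have hGt : G t x0 < r := hx0L t ⟨le_refl _, htK.2⟩
    have hμ0t : μ0 < t := by
      by_contra hle
      push_neg at hle
      exact absurd (hx0L μ0 ⟨hle, hμ0K.2⟩) (by linarith)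
    set B := {μ : ℝ | μ ∈ Icc μ0 t ∧ r ≤ G μ x0} with hB
    have hBne : μ0 ∈ B := ⟨⟨le_refl _, hμ0t.le⟩, hμ0r.le⟩
    have hBbdd : BddAbove B := ⟨t, fun μ hμ => hμ.1.2⟩
    have hBclosed : IsClosed B :=
      (isClosed_Icc).inter (isClosed_le continuous_const (hGc x0))
    set β := sSup B with hβ
    have hβB : β ∈ B := hBclosed.csSup_mem ⟨μ0, hBne⟩ hBbdd
    have hβt : β < t := by
      rcases lt_or_eq_of_le hβB.1.2 with h | h
      · exact h
      · exfalso; have h2 := hβB.2; rw [h] at h2; linarith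
    have hx0Lgen : ∀ lam : ℝ, β < lam → lam ≤ t → x0 ∈ L lam := by
      intro lam ha hb' μ hμ
      rcases le_or_gt t μ with h | h
      · exact hx0L μ ⟨h, hμ.2⟩
      · by_contra hge
        push_neg at hge
        have hμB : μ ∈ B := ⟨⟨by linarith [hβB.1.1, hμ.1], h.le⟩, hge⟩
        have := le_csSup hBbdd hμB
        linarith [hμ.1]
    set p := (β + t)/2 with hp
    have hpK : p ∈ Icc (-(π/2)) (π/2) :=
      ⟨by linarith [hβB.1.1, hμ0K.1], by linarith [htK.2]⟩
    have hpcl := hdense hpK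
    rw [_root_.mem_closure_iff] at hpcl
    obtain ⟨lam, hlamIoo, hlamD⟩ := hpcl (Ioo β t) isOpen_Ioo ⟨by linarith, by linarith⟩
    obtain ⟨hlamK, hconn⟩ := hlamD
    have hx0lam : x0 ∈ L lam := hx0Lgen lam hlamIoo.1 hlamIoo.2.le
    obtain ⟨s, hsS, hls⟩ := exists_lt_of_lt_csSup ⟨_, hSne⟩ (ht ▸ hlamIoo.2)
    obtain ⟨x1, hx1⟩ := hsS.2
    have hx1lam : x1 ∈ R lam := hRanti hls.le hx1
    have hsub : {x : X | G lam x < r} ⊆ L lam ∪ R lam := fun x hx => hcover lam hlamK x hx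
    have hLopen : IsOpen (L lam) := hopen lam (π/2) hlamK.2
    have hRopen : IsOpen (R lam) := hopen (-(π/2)) lam hlamK.1
    have hne1 : ({x : X | G lam x < r} ∩ L lam).Nonempty :=
      ⟨x0, hx0lam lam ⟨le_refl _, hlamK.2⟩, hx0lam⟩
    have hne2 : ({x : X | G lam x < r} ∩ R lam).Nonempty :=
      ⟨x1, hx1lam lam ⟨hlamK.1, le_refl _⟩, hx1lam⟩
    obtain ⟨x2, _, hx2L, hx2R⟩ := hconn (L lam) (R lam) hLopen hRopen hsub hne1 hne2
    exact hdisj lam hlamK x2 hx2L hx2R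
  · -- x0 ∈ R t : sup contradiction
    have hGt : G t x0 < r := hx0R t ⟨htK.1, le_refl _⟩
    have hμ0t : t < μ0 := by
      by_contra hle
      push_neg at hle
      exact absurd (hx0R μ0 ⟨hμ0K.1, hle⟩) (by linarith)
    set B := {μ : ℝ | μ ∈ Icc t μ0 ∧ r ≤ G μ x0} with hB
    have hBne : μ0 ∈ B := ⟨⟨hμ0t.le, le_refl _⟩, hμ0r.le⟩
    have hBbdd : BddBelow B := ⟨t, fun μ hμ => hμ.1.1⟩
    have hBclosed : IsClosed B :=
      (isClosed_Icc).inter (isClosed_le continuous_const (hGc x0))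
    set α := sInf B with hαd
    have hαB : α ∈ B := hBclosed.csInf_mem ⟨μ0, hBne⟩ hBbdd
    have hαt : t < α := by
      rcases lt_or_eq_of_le hαB.1.1 with h | h
      · exact h
      · exfalso; have h2 := hαB.2; rw [← h] at h2; linarith
    set lam := (t + α)/2 with hlamd
    have hlamS : lam ∈ S := by
      refine ⟨⟨by linarith [htK.1], by linarith [hαB.1.2, hμ0K.2]⟩, ⟨x0, ?_⟩⟩
      intro μ hμ
      rcases le_or_gt μ t with h | h
      · exact hx0R μ ⟨hμ.1, h⟩
      · by_contra hge
        push_neg at hge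
        have hμB : μ ∈ B := ⟨⟨h.le, by linarith [hμ.2, hαB.1.2]⟩, hge⟩
        have := csInf_le hBbdd hμB
        linarith [hμ.2]
    have := le_csSup hSbdd hlamS
    rw [← ht] at this
    linarith

/-- Theorem 3.2: with ψ ≥ 0 and a dense set of λ ∈ [-π/2, π/2] for which
(sin λ + c)φ + (cos λ + d)ψ + ω is inf-connected, one has
inf (cφ + dψ + √(φ²+ψ²) + ω) = sup_λ inf_x ((sin λ + c)φ + (cos λ + d)ψ + ω). -/
theorem stmt6
    {X : Type*} [TopologicalSpace X]
    (φ ψ ω : X → ℝ)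
    (hφ : Continuous φ) (hψ : Continuous ψ) (hω : Continuous ω)
    (hψ0 : ∀ x : X, 0 ≤ ψ x)
    (c d : ℝ)
    (hdense : Icc (-(π / 2)) (π / 2) ⊆ closure
      {l : ℝ | l ∈ Icc (-(π / 2)) (π / 2) ∧ ∀ r : ℝ,
        IsPreconnected
          {x : X | (Real.sin l + c) * φ x + (Real.cos l + d) * ψ x + ω x < r}}) :
    (⨅ x : X, ((c * φ x + d * ψ x +
        Real.sqrt ((φ x) ^ 2 + (ψ x) ^ 2) + ω x : ℝ) : EReal)) =
      ⨆ l ∈ Icc (-(π / 2)) (π / 2), ⨅ x : X,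
        (((Real.sin l + c) * φ x + (Real.cos l + d) * ψ x + ω x : ℝ) : EReal) := by
  refine le_antisymm ?_ ?_
  · -- hard direction
    by_contra hlt
    push_neg at hlt
    obtain ⟨r, hr1, hr2⟩ := EReal.exists_between_coe_real hlt
    have h2 : ∀ x : X, r < c * φ x + d * ψ x + Real.sqrt ((φ x) ^ 2 + (ψ x) ^ 2) + ω x := by
      intro x
      have := lt_of_lt_of_le hr2 (iInf_le _ x)
      exact_mod_cast this
    have h1 : ∀ l ∈ Icc (-(π/2)) (π/2), ∃ x : X,
        (Real.sin l + c) * φ x + (Real.cos l + d) * ψ x + ω x < r := by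
      intro l hl
      have hle : (⨅ x : X, (((Real.sin l + c) * φ x + (Real.cos l + d) * ψ x + ω x : ℝ) : EReal))
          ≤ ⨆ l ∈ Icc (-(π / 2)) (π / 2), ⨅ x : X,
            (((Real.sin l + c) * φ x + (Real.cos l + d) * ψ x + ω x : ℝ) : EReal) :=
        le_iSup₂ (f := fun l (_ : l ∈ Icc (-(π / 2)) (π / 2)) => ⨅ x : X,
          (((Real.sin l + c) * φ x + (Real.cos l + d) * ψ x + ω x : ℝ) : EReal)) l hl
      have hlt' := lt_of_le_of_lt hle hr1
      rw [iInf_lt_iff] at hlt'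
      obtain ⟨x, hx⟩ := hlt'
      exact ⟨x, by exact_mod_cast hx⟩
    refine mainContra (fun l x => (Real.sin l + c) * φ x + (Real.cos l + d) * ψ x + ω x) r
      (fun x => by fun_prop) (fun A B hAB => openAux φ ψ ω hφ hψ hω c d r A B hAB)
      ?_ ?_ ?_ h1
    · -- quasi
      intro x μ1 l μ2 hb1 hb2 hb3 hb4
      have e : ∀ μ : ℝ, (Real.sin μ + c) * φ x + (Real.cos μ + d) * ψ x + ω x
          = (φ x * Real.sin μ + ψ x * Real.cos μ) + (c * φ x + d * ψ x + ω x) := by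
        intro μ; ring
      rcases quasi (a := φ x) (b := ψ x) (hψ0 x) hb1 hb2 hb3 hb4 with h | h
      · left; beta_reduce; rw [e, e]; linarith
      · right; beta_reduce; rw [e, e]; linarith
    · -- attain
      intro x
      obtain ⟨μ, hμ, he⟩ := attain (a := φ x) (b := ψ x) (hψ0 x)
      refine ⟨μ, hμ, ?_⟩
      have h2x := h2 x
      have e : (Real.sin μ + c) * φ x + (Real.cos μ + d) * ψ x + ω x
          = c * φ x + d * ψ x + (Real.sin μ * φ x + Real.cos μ * ψ x) + ω x := by ring
      beta_reduce
      rw [e, he]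
      linarith
    · -- dense
      intro l hl
      have := hdense hl
      refine closure_mono ?_ this
      intro l' hl'
      exact ⟨hl'.1, hl'.2 r⟩
  · -- easy direction
    refine iSup₂_le fun l hl => ?_
    refine le_iInf fun x => ?_
    refine (iInf_le _ x).trans ?_
    rw [EReal.coe_le_coe_iff]
    have := cauchy (φ x) (ψ x) l
    nlinarith [cauchy (φ x) (ψ x) l]
end

section
/- Let X be a nonempty closed convex subset of a reflexive real Banach space and let φ, ψ : X → ℝ be continuous convex functions with φ(x) ≥ 0 and ψ(x) > 0 for all x ∈ X. If X is unbounded, suppose also that ψ(x) → +∞ as ‖x‖ → +∞. Then there exists x̃ ∈ X such that φ(x̃)² + ψ(x̃)² = inf_{x∈X} ( φ(x̃)φ(x) + ψ(x̃)ψ(x) ). -/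
/-!
The function `f = φ² + ψ²` is convex and continuous on `X`, and coercivity of `ψ` makes its
sublevel sets bounded. In a reflexive space a bounded closed convex set is weakly compact and a
continuous convex function is weakly lower semicontinuous, so `f` attains its minimum on `X` at
some `x̃`. Moving from `x̃` towards any `x ∈ X` and using convexity of `φ`, `ψ` bounds `f` along the
segment by `((1-t)φ(x̃) + tφ(x))² + ((1-t)ψ(x̃) + tψ(x))²`, whose derivative at `t = 0` must be
nonnegative; this is the claimed inequality.
-/

open Set Filter Topology NormedSpace Bornology

section Weak

variable {E : Type*} [NormedAddCommGroup E] [NormedSpace ℝ E]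

theorem IsClosed.toWeakSpace_image {K : Set E} (hcl : IsClosed K) (hcv : Convex ℝ K) :
    IsClosed (toWeakSpace ℝ E '' K) := by
  have h := hcv.toWeakSpace_closure (𝕜 := ℝ)
  rw [hcl.closure_eq] at h
  exact h ▸ isClosed_closure

theorem isCompact_toWeakSpace_image_of_surjective
    (hrefl : Function.Surjective (inclusionInDoubleDual ℝ E))
    {K : Set E} (hcl : IsClosed K) (hcv : Convex ℝ K) (hbd : IsBounded K) :
    IsCompact (toWeakSpace ℝ E '' K) := by
  rw [← (hcl.toWeakSpace_image hcv).closure_eq]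
  refine isCompact_closure_of_isBounded ℝ E _ ?_ ?_
  · rwa [(toWeakSpace ℝ E).injective.preimage_image]
  · rintro _ -
    obtain ⟨x, hx⟩ := hrefl _
    exact ⟨toWeakSpace ℝ E x, congrArg StrongDual.toWeakDual hx⟩

theorem ConvexOn.lowerSemicontinuousOn_toWeakSpace {K : Set E} {f : E → ℝ}
    (hcl : IsClosed K) (hfc : ContinuousOn f K) (hfcv : ConvexOn ℝ K f) :
    LowerSemicontinuousOn (f ∘ (toWeakSpace ℝ E).symm) (toWeakSpace ℝ E '' K) := by
  refine lowerSemicontinuousOn_iff_preimage_Iic.2 fun b ↦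
    ⟨_, (hfc.preimage_isClosed_of_isClosed hcl isClosed_Iic).toWeakSpace_image
      (hfcv.convex_le b), ?_⟩
  ext w
  constructor
  · rintro ⟨⟨x, hx, rfl⟩, hfx⟩
    exact ⟨⟨x, hx, rfl⟩, x, ⟨hx, by simpa using hfx⟩, rfl⟩
  · rintro ⟨hw, x, ⟨hx, hfx⟩, rfl⟩
    exact ⟨hw, by simpa using hfx⟩

variable (hrefl : Function.Surjective (inclusionInDoubleDual ℝ E))
include hrefl

theorem ConvexOn.exists_isMinOn_of_isBounded {K : Set E} {f : E → ℝ} (hne : K.Nonempty)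
    (hcl : IsClosed K) (hbd : IsBounded K)
    (hfc : ContinuousOn f K) (hfcv : ConvexOn ℝ K f) : ∃ a ∈ K, IsMinOn f K a := by
  obtain ⟨_, ⟨a, ha, rfl⟩, hmin⟩ := LowerSemicontinuousOn.exists_isMinOn (hne.image _)
    (isCompact_toWeakSpace_image_of_surjective hrefl hcl hfcv.1 hbd)
    (hfcv.lowerSemicontinuousOn_toWeakSpace hcl hfc)
  exact ⟨a, ha, fun x hx ↦ by simpa using hmin (mem_image_of_mem _ hx)⟩

theorem ConvexOn.exists_isMinOn_of_isBounded_sublevel {X : Set E} {f : E → ℝ} {x₀ : E}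
    (hx₀ : x₀ ∈ X) (hcl : IsClosed X)
    (hfc : ContinuousOn f X) (hfcv : ConvexOn ℝ X f) (hbd : IsBounded {x ∈ X | f x ≤ f x₀}) :
    ∃ a ∈ X, IsMinOn f X a := by
  set K := {x ∈ X | f x ≤ f x₀}
  have hKX : K ⊆ X := sep_subset _ _
  have hKcv : Convex ℝ K := hfcv.convex_le _
  have hKne : K.Nonempty := ⟨x₀, hx₀, le_rfl⟩
  obtain ⟨a, ⟨ha, hax₀⟩, hmin⟩ := (hfcv.subset hKX hKcv).exists_isMinOn_of_isBounded hrefl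
    hKne (hfc.preimage_isClosed_of_isClosed hcl isClosed_Iic) hbd (hfc.mono hKX)
  refine ⟨a, ha, fun x hx ↦ ?_⟩
  by_cases hx' : f x ≤ f x₀
  · exact isMinOn_iff.1 hmin x ⟨hx, hx'⟩
  · exact hax₀.trans (not_le.1 hx').le

end Weak

theorem isBounded_sep_le_of_coercive {E : Type*} [SeminormedAddCommGroup E] {X : Set E}
    {g : E → ℝ} (hg : ∀ M : ℝ, ∃ R : ℝ, ∀ x ∈ X, R ≤ ‖x‖ → M ≤ g x) (c : ℝ) :
    IsBounded {x ∈ X | g x ≤ c} := by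
  obtain ⟨R, hR⟩ := hg (c + 1)
  refine (Metric.isBounded_ball (x := (0 : E)) (r := R)).subset fun x ⟨hx, hgx⟩ ↦ ?_
  rw [mem_ball_zero_iff]
  by_contra! hRx
  linarith [hR x hx hRx]

theorem sq_add_sq_le_mul_add_mul_of_forall {A B p q : ℝ}
    (h : ∀ t ∈ Ioc (0 : ℝ) 1,
      A ^ 2 + B ^ 2 ≤ ((1 - t) * A + t * p) ^ 2 + ((1 - t) * B + t * q) ^ 2) :
    A ^ 2 + B ^ 2 ≤ A * p + B * q := by
  set D := A * (p - A) + B * (q - B)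
  set S := (p - A) ^ 2 + (q - B) ^ 2
  -- `t * (2 D + t S)` is the increase of the right-hand side of `h` over `A² + B²`
  have hpos : ∀ᶠ t in 𝓝[>] 0, 0 ≤ 2 * D + t * S := by
    filter_upwards [Ioc_mem_nhdsGT zero_lt_one] with t ht
    refine nonneg_of_mul_nonneg_right ?_ ht.1
    linarith [h t ht]
  have hlim : Tendsto (fun t : ℝ ↦ 2 * D + t * S) (𝓝[>] 0) (𝓝 (2 * D)) := by
    have hcont : Continuous fun t : ℝ ↦ 2 * D + t * S := by fun_prop
    simpa using (hcont.tendsto 0).mono_left nhdsWithin_le_nhds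
  linarith [ge_of_tendsto hlim hpos]

theorem sq_add_sq_le_of_isMinOn {E : Type*} [AddCommGroup E] [Module ℝ E] {X : Set E}
    {φ ψ : E → ℝ} (hφcv : ConvexOn ℝ X φ) (hψcv : ConvexOn ℝ X ψ)
    (hφ0 : ∀ x ∈ X, 0 ≤ φ x) (hψ0 : ∀ x ∈ X, 0 ≤ ψ x) {a x : E} (ha : a ∈ X) (hx : x ∈ X)
    (hmin : IsMinOn (fun y ↦ φ y ^ 2 + ψ y ^ 2) X a) :
    φ a ^ 2 + ψ a ^ 2 ≤ φ a * φ x + ψ a * ψ x := by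
  refine sq_add_sq_le_mul_add_mul_of_forall fun t ⟨ht0, ht1⟩ ↦ ?_
  have hab : 1 - t + t = 1 := by ring
  have hy := hφcv.1 ha hx (sub_nonneg.2 ht1) ht0.le hab
  calc φ a ^ 2 + ψ a ^ 2 ≤ φ ((1 - t) • a + t • x) ^ 2 + ψ ((1 - t) • a + t • x) ^ 2 := hmin hy
    _ ≤ _ := by
      gcongr
      · exact hφ0 _ hy
      · simpa using hφcv.2 ha hx (sub_nonneg.2 ht1) ht0.le hab
      · exact hψ0 _ hy
      · simpa using hψcv.2 ha hx (sub_nonneg.2 ht1) ht0.le hab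

theorem stmt8_general
    {E : Type*} [NormedAddCommGroup E] [NormedSpace ℝ E]
    (hrefl : Function.Surjective (NormedSpace.inclusionInDoubleDual ℝ E))
    (X : Set E) (hXne : X.Nonempty) (hXcl : IsClosed X)
    (φ ψ : E → ℝ)
    (hφc : ContinuousOn φ X) (hψc : ContinuousOn ψ X)
    (hφcv : ConvexOn ℝ X φ) (hψcv : ConvexOn ℝ X ψ)
    (hφ0 : ∀ x ∈ X, 0 ≤ φ x) (hψ0 : ∀ x ∈ X, 0 < ψ x)
    (hcoer : ¬ Bornology.IsBounded X →
      ∀ M : ℝ, ∃ R : ℝ, ∀ x ∈ X, R ≤ ‖x‖ → M ≤ ψ x) :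
    ∃ xt ∈ X, ∀ x ∈ X,
      (φ xt) ^ 2 + (ψ xt) ^ 2 ≤ φ xt * φ x + ψ xt * ψ x := by
  have hψ0' : ∀ x ∈ X, 0 ≤ ψ x := fun x hx ↦ (hψ0 x hx).le
  set f : E → ℝ := fun x ↦ φ x ^ 2 + ψ x ^ 2
  have hfcv : ConvexOn ℝ X f := (hφcv.pow hφ0 2).add (hψcv.pow hψ0' 2)
  have hfc : ContinuousOn f X := (hφc.pow 2).add (hψc.pow 2)
  obtain ⟨x₀, hx₀⟩ := hXne
  have hbd : IsBounded {x ∈ X | f x ≤ f x₀} := by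
    by_cases hX : IsBounded X
    · exact hX.subset (sep_subset _ _)
    -- on this sublevel set `ψ² ≤ f x₀`, hence `ψ ≤ max 1 (f x₀)`
    refine (isBounded_sep_le_of_coercive (hcoer hX) (max 1 (f x₀))).subset
      fun x ⟨hx, hfx⟩ ↦ ⟨hx, ?_⟩
    nlinarith [le_max_left 1 (f x₀), le_max_right 1 (f x₀), sq_nonneg (φ x), hψ0 x hx]
  obtain ⟨a, ha, hmin⟩ := hfcv.exists_isMinOn_of_isBounded_sublevel hrefl hx₀ hXcl hfc hbd
  exact ⟨a, ha, fun x hx ↦ sq_add_sq_le_of_isMinOn hφcv hψcv hφ0 hψ0' ha hx hmin⟩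

/-- Corollary 3.1: X a nonempty closed convex subset of a reflexive real Banach
space, φ, ψ continuous and convex on X, φ ≥ 0 and ψ > 0 on X, with ψ coercive on
X if X is unbounded.  Then there exists x̃ ∈ X with
φ(x̃)² + ψ(x̃)² = inf_{x∈X} (φ(x̃)φ(x) + ψ(x̃)ψ(x)). -/
theorem stmt8
    {E : Type*} [NormedAddCommGroup E] [NormedSpace ℝ E] [CompleteSpace E]
    (hrefl : Function.Surjective (NormedSpace.inclusionInDoubleDual ℝ E))
    (X : Set E) (hXne : X.Nonempty) (hXcl : IsClosed X) (hXcv : Convex ℝ X)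
    (φ ψ : E → ℝ)
    (hφc : ContinuousOn φ X) (hψc : ContinuousOn ψ X)
    (hφcv : ConvexOn ℝ X φ) (hψcv : ConvexOn ℝ X ψ)
    (hφ0 : ∀ x ∈ X, 0 ≤ φ x) (hψ0 : ∀ x ∈ X, 0 < ψ x)
    (hcoer : ¬ Bornology.IsBounded X →
      ∀ M : ℝ, ∃ R : ℝ, ∀ x ∈ X, R ≤ ‖x‖ → M ≤ ψ x) :
    ∃ xt ∈ X, ∀ x ∈ X,
      (φ xt) ^ 2 + (ψ xt) ^ 2 ≤ φ xt * φ x + ψ xt * ψ x :=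
  stmt8_general hrefl X hXne hXcl φ ψ hφc hψc hφcv hψcv hφ0 hψ0 hcoer
end

section
/- Let X be a reflexive real Banach space and let φ, ψ : X → ℝ be continuous convex functions which are bounded below and Gateaux differentiable (with Gateaux derivatives φ'(x), ψ'(x) ∈ X*), and such that ψ(x) → +∞ as ‖x‖ → +∞. Then for every c ≤ inf_X φ and every d < inf_X ψ there exists x̃ ∈ X such that (φ(x̃) − c)·φ'(x̃) + (ψ(x̃) − d)·ψ'(x̃) = 0 in X*. -/
/-!
The function `f = (φ - c)² + (ψ - d)²` is convex (a sum of squares of nonnegative convex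
functions), continuous and coercive. In a reflexive space closed bounded convex sets are weakly
compact (Banach–Alaoglu in the bidual) and closed convex sets are weakly closed (Mazur), so `f`
attains its minimum at some `x̃`. There every directional derivative
`2 (φ x̃ - c) φ'(x̃) v + 2 (ψ x̃ - d) ψ'(x̃) v` of `f` vanishes.
-/

open Set Filter Topology NormedSpace Bornology

theorem isCompact_toWeakSpace_image_of_reflexive
    {X : Type*} [NormedAddCommGroup X] [NormedSpace ℝ X]
    (hrefl : Function.Surjective (inclusionInDoubleDual ℝ X)) {s : Set X}
    (hb : IsBounded s) (hconv : Convex ℝ s) (hcl : IsClosed s) :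
    IsCompact (toWeakSpace ℝ X '' s) := by
  have hweak : closure (toWeakSpace ℝ X '' s) = toWeakSpace ℝ X '' s := by
    rw [← hconv.toWeakSpace_closure ℝ, hcl.closure_eq]
  rw [← hweak]
  refine isCompact_closure_of_isBounded ℝ X _ ?_ fun y _ => hrefl y
  rwa [(toWeakSpace ℝ X).injective.preimage_image]

theorem ConvexOn.lowerSemicontinuous_comp_toWeakSpace_symm
    {E : Type*} [AddCommGroup E] [Module ℝ E] [TopologicalSpace E] [IsTopologicalAddGroup E]
    [ContinuousSMul ℝ E] [LocallyConvexSpace ℝ E] {f : E → ℝ}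
    (hcv : ConvexOn ℝ univ f) (hf : LowerSemicontinuous f) :
    LowerSemicontinuous (f ∘ (toWeakSpace ℝ E).symm) := by
  refine lowerSemicontinuous_iff_isClosed_preimage.2 fun r => ?_
  have hclosed : IsClosed {x | f x ≤ r} := hf.isClosed_preimage r
  have hconv : Convex ℝ {x | f x ≤ r} := by simpa only [sep_univ] using hcv.convex_le r
  have hweak := hconv.toWeakSpace_closure ℝ
  rw [hclosed.closure_eq] at hweak
  have hsublevel :
      f ∘ (toWeakSpace ℝ E).symm ⁻¹' Iic r = toWeakSpace ℝ E '' {x | f x ≤ r} := by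
    rw [(toWeakSpace ℝ E).image_eq_preimage_symm]
    rfl
  rw [hsublevel, hweak]
  exact isClosed_closure

theorem ConvexOn.exists_forall_le_of_reflexive
    {X : Type*} [NormedAddCommGroup X] [NormedSpace ℝ X]
    (hrefl : Function.Surjective (inclusionInDoubleDual ℝ X)) {f : X → ℝ}
    (hcv : ConvexOn ℝ univ f) (hf : LowerSemicontinuous f)
    (hcoer : Tendsto f (cobounded X) atTop) :
    ∃ z, ∀ x, f z ≤ f x := by
  set S := {x | f x ≤ f 0}
  have hS : IsBounded S := by
    rw [isBounded_def]
    filter_upwards [hcoer.eventually_gt_atTop (f 0)] with x hx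
    simpa [S] using hx
  have hK := isCompact_toWeakSpace_image_of_reflexive hrefl hS
    (by simpa only [sep_univ] using hcv.convex_le (f 0)) (hf.isClosed_preimage _)
  obtain ⟨w, ⟨z, hzS, rfl⟩, hmin⟩ :=
    LowerSemicontinuousOn.exists_isMinOn (Nonempty.image _ ⟨0, le_refl (f 0)⟩) hK
      ((hcv.lowerSemicontinuous_comp_toWeakSpace_symm hf).lowerSemicontinuousOn _)
  refine ⟨z, fun x => ?_⟩
  by_cases hx : x ∈ S
  · simpa using hmin (mem_image_of_mem _ hx)
  · exact hzS.trans (not_le.1 hx).le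

theorem hasLineDerivAt_of_tendsto_div {E : Type*} [AddCommGroup E] [Module ℝ E] {f : E → ℝ}
    {f' : ℝ} {x v : E}
    (h : Tendsto (fun t : ℝ => (f (x + t • v) - f x) / t) (𝓝[≠] 0) (𝓝 f')) :
    HasLineDerivAt ℝ f f' x v :=
  hasLineDerivAt_iff_tendsto_slope_zero.2 (by simpa only [smul_eq_mul, inv_mul_eq_div] using h)

theorem HasLineDerivAt.sub_const_sq {E : Type*} [AddCommGroup E] [Module ℝ E] {f : E → ℝ}
    {f' : ℝ} {x v : E} (h : HasLineDerivAt ℝ f f' x v) (c : ℝ) :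
    HasLineDerivAt ℝ (fun y => (f y - c) ^ 2) (2 * (f x - c) * f') x v := by
  simpa [HasLineDerivAt] using (h.sub_const c).fun_pow 2

theorem stmt9_general
    {X : Type*} [NormedAddCommGroup X] [NormedSpace ℝ X]
    (hrefl : Function.Surjective (NormedSpace.inclusionInDoubleDual ℝ X))
    (φ ψ : X → ℝ) (φ' ψ' : X → (X →L[ℝ] ℝ))
    (hφc : Continuous φ) (hψc : Continuous ψ)
    (hφcv : ConvexOn ℝ univ φ) (hψcv : ConvexOn ℝ univ ψ)
    (hφ' : ∀ x v : X, Tendsto (fun t : ℝ => (φ (x + t • v) - φ x) / t)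
      (nhdsWithin 0 {0}ᶜ) (nhds (φ' x v)))
    (hψ' : ∀ x v : X, Tendsto (fun t : ℝ => (ψ (x + t • v) - ψ x) / t)
      (nhdsWithin 0 {0}ᶜ) (nhds (ψ' x v)))
    (hcoer : ∀ M : ℝ, ∃ R : ℝ, ∀ x : X, R ≤ ‖x‖ → M ≤ ψ x)
    (c d : ℝ) (hc : ∀ x : X, c ≤ φ x) (hd : ∃ e > d, ∀ x : X, e ≤ ψ x) :
    ∃ xt : X, (φ xt - c) • φ' xt + (ψ xt - d) • ψ' xt = 0 := by
  obtain ⟨e, hed, he⟩ := hd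
  set f : X → ℝ := fun x => (φ x - c) ^ 2 + (ψ x - d) ^ 2
  have hcv : ConvexOn ℝ univ f :=
    ((hφcv.add_const (-c)).pow (fun x _ => by simpa [sub_eq_add_neg] using hc x) 2).add
      ((hψcv.add_const (-d)).pow
        (fun x _ => by simpa [sub_eq_add_neg] using hed.le.trans (he x)) 2)
  have hψ_coer : Tendsto (fun x => ψ x - d) (cobounded X) atTop :=
    tendsto_atTop_add_const_right _ _ <| tendsto_atTop.2 fun M =>
      let ⟨R, hR⟩ := hcoer M
      (tendsto_norm_cobounded_atTop.eventually_ge_atTop R).mono hR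
  have hf_coer : Tendsto f (cobounded X) atTop :=
    tendsto_atTop_mono (fun x => le_add_of_nonneg_left (sq_nonneg _))
      ((tendsto_pow_atTop two_ne_zero).comp hψ_coer)
  obtain ⟨z, hz⟩ := hcv.exists_forall_le_of_reflexive hrefl
    (by fun_prop : Continuous f).lowerSemicontinuous hf_coer
  refine ⟨z, ContinuousLinearMap.ext fun v => ?_⟩
  have hderiv := ((hasLineDerivAt_of_tendsto_div (hφ' z v)).sub_const_sq c).add
    ((hasLineDerivAt_of_tendsto_div (hψ' z v)).sub_const_sq d)
  have hcrit := IsLocalMin.hasLineDerivAt_eq_zero (Eventually.of_forall hz) hderiv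
  show (φ z - c) * φ' z v + (ψ z - d) * ψ' z v = 0
  linarith

/-- Corollary 3.2: X reflexive real Banach space, φ, ψ convex, bounded below,
Gateaux differentiable, ψ coercive.  Then for every c ≤ inf φ and d < inf ψ
there is x̃ with (φ(x̃) - c)φ'(x̃) + (ψ(x̃) - d)ψ'(x̃) = 0. -/
theorem stmt9
    {X : Type*} [NormedAddCommGroup X] [NormedSpace ℝ X] [CompleteSpace X]
    (hrefl : Function.Surjective (NormedSpace.inclusionInDoubleDual ℝ X))
    (φ ψ : X → ℝ) (φ' ψ' : X → (X →L[ℝ] ℝ))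
    (hφc : Continuous φ) (hψc : Continuous ψ)
    (hφcv : ConvexOn ℝ univ φ) (hψcv : ConvexOn ℝ univ ψ)
    (hφbd : BddBelow (range φ)) (hψbd : BddBelow (range ψ))
    (hφ' : ∀ x v : X, Tendsto (fun t : ℝ => (φ (x + t • v) - φ x) / t)
      (nhdsWithin 0 {0}ᶜ) (nhds (φ' x v)))
    (hψ' : ∀ x v : X, Tendsto (fun t : ℝ => (ψ (x + t • v) - ψ x) / t)
      (nhdsWithin 0 {0}ᶜ) (nhds (ψ' x v)))
    (hcoer : ∀ M : ℝ, ∃ R : ℝ, ∀ x : X, R ≤ ‖x‖ → M ≤ ψ x)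
    (c d : ℝ) (hc : ∀ x : X, c ≤ φ x) (hd : ∃ e > d, ∀ x : X, e ≤ ψ x) :
    ∃ xt : X, (φ xt - c) • φ' xt + (ψ xt - d) • ψ' xt = 0 :=
  stmt9_general hrefl φ ψ φ' ψ' hφc hψc hφcv hψcv hφ' hψ' hcoer c d hc hd
end

section
/- Let X be a topological space and φ, ψ, ω : X → ℝ continuous with ψ(x) > 0 for all x ∈ X and inf_{x∈X} φ(x)/ψ(x) > −∞. Set I := [ inf_X φ/ψ , sup_X φ/ψ ] ∩ ℝ (a nonempty interval, unbounded above if sup φ/ψ = +∞). Suppose that for each λ in a dense subset of I the function x ↦ e^{λ}(φ(x) + (1 − λ)ψ(x)) + ω(x) is inf-connected, and that there exists a (possibly different) topology τ₁ on X such that for each λ ∈ I the function x ↦ e^{λ}(φ(x) + (1 − λ)ψ(x)) + ω(x) is τ₁-lower semicontinuous and for some λ₀ ∈ I this function is τ₁-inf-compact. Then there exists x̃ ∈ X such that ψ(x̃) + e^{−φ(x̃)/ψ(x̃)}·ω(x̃) = inf_{x∈X} ( φ(x) + (1 − φ(x̃)/ψ(x̃))ψ(x) + e^{−φ(x̃)/ψ(x̃)}·ω(x)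 ). -/
/-!
Write `s = φ / ψ` and `F l x = e^l (φ x + (1 - l) ψ x) + ω x`. Since `e^l (s - l + 1) < e^s` for
`l ≠ s`, the function `l ↦ F l x` peaks exactly at `l = s x`, with value `e^(s x) ψ x + ω x`.
This peak value is `τ₁`-lower semicontinuous and dominates the inf-compact `F l₀`, so it attains
its minimum `c` at some `x̃`. If `F (s x̃) y < c` for some `y`, then the parameters `l` for which
`F l x < c` at some `x` with `s x < l`, resp. `l < s x`, form two open sets covering `I`, both
meeting `I`. A connected sublevel set `{F l < c}` avoids `s = l`, so it cannot reach both sides;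
by density of `D` the two sets are disjoint on `I`, contradicting connectedness of `I`. Hence
`F (s x̃) ≥ c` everywhere, which is the claim after multiplying by `e^(-s x̃)`.
-/

open Set Filter

section Semicontinuity

variable {X γ : Type*} [TopologicalSpace X] [LinearOrder γ]

theorem LowerSemicontinuousAt.of_le_of_eq {f g : X → γ} {x : X}
    (hf : LowerSemicontinuousAt f x) (hfg : f ≤ g) (hx : f x = g x) :
    LowerSemicontinuousAt g x := fun y hy =>
  (hf y (hx.trans_gt hy)).mono fun _ hz => hz.trans_le (hfg _)

theorem LowerSemicontinuous.exists_forall_le_of_isCompact_sublevel [Nonempty X] {f g : X → γ}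
    (hf : LowerSemicontinuous f) (hg : ∀ r, IsCompact {x | g x ≤ r}) (hgf : g ≤ f) :
    ∃ a, ∀ x, f a ≤ f x := by
  obtain ⟨x₀⟩ := ‹Nonempty X›
  have hK : IsCompact {x | f x ≤ f x₀} :=
    (hg (f x₀)).of_isClosed_subset (hf.isClosed_preimage (f x₀))
      fun x (hx : f x ≤ f x₀) => (hgf x).trans hx
  obtain ⟨a, -, ha⟩ := (hf.lowerSemicontinuousOn _).exists_isMinOn ⟨x₀, le_refl (f x₀)⟩ hK
  refine ⟨a, fun x => ?_⟩
  rcases le_total (f x) (f x₀) with hx | hx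
  · exact ha hx
  · exact (ha (le_refl (f x₀))).trans hx

end Semicontinuity

section Peak

variable {X : Type*} [TopologicalSpace X] {F : ℝ → X → ℝ} {s : X → ℝ} {I D : Set ℝ}

theorem le_apply_of_minimizes_peak (hs : Continuous s) (hF : ∀ x, Continuous (F · x))
    (hpeak : ∀ l x, l ≠ s x → F l x < F (s x) x) (hI : IsPreconnected I) (hsI : ∀ x, s x ∈ I)
    (hID : I ⊆ closure D) (hconn : ∀ l ∈ D, ∀ r, IsPreconnected {x | F l x < r})
    {a : X} (ha : ∀ x, F (s a) a ≤ F (s x) x) (x : X) : F (s a) a ≤ F (s a) x := by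
  set c := F (s a) a
  by_contra! hx
  have hne : ∀ l y, F l y < c → s y ≠ l := fun l y hy hyl => (ha y).not_gt (hyl ▸ hy)
  set U := ⋃ y, {l | F l y < c} ∩ Ioi (s y)
  set V := ⋃ y, {l | F l y < c} ∩ Iio (s y)
  have hU : IsOpen U := isOpen_iUnion fun y => (isOpen_lt (hF y) continuous_const).inter isOpen_Ioi
  have hV : IsOpen V := isOpen_iUnion fun y => (isOpen_lt (hF y) continuous_const).inter isOpen_Iio
  have hUV : ∀ {l y}, F l y < c → l ∈ U ∪ V := fun {l y} hy =>
    (hne l y hy).lt_or_gt.imp (fun h => mem_iUnion.2 ⟨y, hy, h⟩) fun h => mem_iUnion.2 ⟨y, hy, h⟩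
  -- a preconnected sublevel set cannot straddle the level set `s = l` it avoids
  have hD_disj : ∀ l ∈ D, l ∉ U ∩ V := by
    rintro l hl ⟨hlU, hlV⟩
    obtain ⟨y₁, hy₁, h₁⟩ := mem_iUnion.1 hlU
    obtain ⟨y₂, hy₂, h₂⟩ := mem_iUnion.1 hlV
    obtain ⟨y, hy, hyl⟩ := ((hconn l hl c).image s hs.continuousOn).Icc_subset
      (mem_image_of_mem s hy₁) (mem_image_of_mem s hy₂) ⟨le_of_lt h₁, le_of_lt h₂⟩
    exact hne l y hy hyl
  have hI_disj : ∀ l ∈ I, l ∉ U ∩ V := fun l hl hlUV =>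
    let ⟨_, hμ, hμD⟩ := mem_closure_iff.1 (hID hl) _ (hU.inter hV) hlUV
    hD_disj _ hμD hμ
  have hcover : I ⊆ U ∪ V := fun l _ => by
    rcases eq_or_ne l (s a) with rfl | hl
    · exact hUV hx
    · exact hUV (hpeak l a hl)
  have hsx : s x ≠ s a := hne _ _ hx
  obtain ⟨l, hlI, hlUV⟩ : (I ∩ (U ∩ V)).Nonempty := by
    rcases hsx.lt_or_gt with h | h
    · exact hI U V hU hV hcover ⟨s a, hsI a, mem_iUnion.2 ⟨x, hx, h⟩⟩
        ⟨s x, hsI x, mem_iUnion.2 ⟨a, hpeak _ a h.ne, h⟩⟩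
    · exact hI U V hU hV hcover ⟨s x, hsI x, mem_iUnion.2 ⟨a, hpeak _ a h.ne', h⟩⟩
        ⟨s a, hsI a, mem_iUnion.2 ⟨x, hx, h⟩⟩
  exact hI_disj l hlI hlUV

end Peak

section Tilt

open Real

theorem exp_mul_add_one_sub_mul_lt {p q l : ℝ} (hq : 0 < q) (hl : l ≠ p / q) :
    exp l * (p + (1 - l) * q) < exp (p / q) * (p + (1 - p / q) * q) :=
  calc exp l * (p + (1 - l) * q) = exp l * (p / q - l + 1) * q := by field_simp; ring
    _ < exp l * exp (p / q - l) * q := by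
      gcongr; exact add_one_lt_exp (sub_ne_zero.2 hl.symm)
    _ = exp (p / q) * (p + (1 - p / q) * q) := by rw [← exp_add]; field_simp; ring_nf

theorem add_exp_neg_mul_le_add_exp_neg_mul {t u v b d : ℝ} (h : exp t * u + b ≤ exp t * v + d) :
    u + exp (-t) * b ≤ v + exp (-t) * d := by
  have h₁ : exp (-t) * exp t = 1 := by rw [← exp_add, neg_add_cancel, exp_zero]
  have h₂ := mul_le_mul_of_nonneg_left h (exp_pos (-t)).le
  linear_combination h₂ + (v - u) * h₁

end Tilt

/-- Theorem 3.5: with ψ > 0, inf φ/ψ > -∞, I = [inf φ/ψ, sup φ/ψ] ∩ ℝ,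
inf-connectedness on a dense subset of I and the τ₁-compactness assumptions,
there exists x̃ with
ψ(x̃) + e^{-φ(x̃)/ψ(x̃)}ω(x̃) = inf_x (φ(x) + (1 - φ(x̃)/ψ(x̃))ψ(x) + e^{-φ(x̃)/ψ(x̃)}ω(x)). -/
theorem stmt12
    {X : Type*} [TopologicalSpace X]
    (φ ψ ω : X → ℝ)
    (hφ : Continuous φ) (hψ : Continuous ψ) (hω : Continuous ω)
    (hψ0 : ∀ x : X, 0 < ψ x)
    (hbd : (⊥ : EReal) < ⨅ x : X, ((φ x / ψ x : ℝ) : EReal))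
    (I : Set ℝ)
    (hIdef : I = {l : ℝ |
      (⨅ x : X, ((φ x / ψ x : ℝ) : EReal)) ≤ (l : EReal) ∧
      (l : EReal) ≤ ⨆ x : X, ((φ x / ψ x : ℝ) : EReal)})
    (D : Set ℝ) (hD : D ⊆ I) (hDdense : I ⊆ closure D)
    (hconn : ∀ l ∈ D, ∀ r : ℝ,
      IsPreconnected
        {x : X | Real.exp l * (φ x + (1 - l) * ψ x) + ω x < r})
    (τ₁ : TopologicalSpace X)
    (hlsc : ∀ l ∈ I, @LowerSemicontinuous X ℝ τ₁ _
      (fun x => Real.exp l * (φ x + (1 - l) * ψ x) + ω x))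
    (hinfcpt : ∃ l₀ ∈ I, ∀ r : ℝ,
      @IsCompact X τ₁
        {x : X | Real.exp l₀ * (φ x + (1 - l₀) * ψ x) + ω x ≤ r}) :
    ∃ xt : X, ∀ x : X,
      ψ xt + Real.exp (-(φ xt / ψ xt)) * ω xt ≤
      φ x + (1 - φ xt / ψ xt) * ψ x + Real.exp (-(φ xt / ψ xt)) * ω x := by
  obtain ⟨l₀, hl₀, hcpt⟩ := hinfcpt
  set F : ℝ → X → ℝ := fun l x => Real.exp l * (φ x + (1 - l) * ψ x) + ω x
  set s : X → ℝ := fun x => φ x / ψ x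
  have hpeak : ∀ l x, l ≠ s x → F l x < F (s x) x := fun l x hl =>
    add_lt_add_left (exp_mul_add_one_sub_mul_lt (hψ0 x) hl) _
  have hle_peak : ∀ l x, F l x ≤ F (s x) x := fun l x =>
    (eq_or_ne l (s x)).elim (fun h => h ▸ le_rfl) fun h => (hpeak l x h).le
  have hsI : ∀ x, s x ∈ I := fun x => hIdef ▸ ⟨iInf_le _ x, le_iSup (fun y => (s y : EReal)) x⟩
  have hI : IsPreconnected I :=
    hIdef ▸ (ordConnected_Icc.preimage_mono EReal.coe_strictMono.monotone).isPreconnected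
  have : Nonempty X := by
    rcases isEmpty_or_nonempty X with hX | hX
    · simp [hIdef] at hl₀
    · exact hX
  obtain ⟨a, ha⟩ : ∃ a, ∀ x, F (s a) a ≤ F (s x) x :=
    LowerSemicontinuous.exists_forall_le_of_isCompact_sublevel
      (fun x => LowerSemicontinuousAt.of_le_of_eq (hlsc (s x) (hsI x) x) (hle_peak (s x)) rfl)
      hcpt (hle_peak l₀)
  -- `τ₁` is a local instance shadowing the topology of `X`, so it has to go before we use the latter
  clear hlsc hcpt τ₁
  have hψa : φ a + (1 - φ a / ψ a) * ψ a = ψ a := by field_simp [(hψ0 a).ne']; ring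
  refine ⟨a, fun x => add_exp_neg_mul_le_add_exp_neg_mul ?_⟩
  calc Real.exp (s a) * ψ a + ω a = F (s a) a := by simp only [F, s, hψa]
    _ ≤ F (s a) x := le_apply_of_minimizes_peak (hφ.div hψ fun x => (hψ0 x).ne')
      (fun x => by fun_prop) hpeak hI hsI hDdense hconn ha x
end

section
/- Let X be a nonempty open subset of a real normed space E and let φ, ψ, ω : X → ℝ be continuous and Gateaux differentiable functions, with ψ(x) > 0 for all x ∈ X and inf_{x∈X} φ(x)/ψ(x) > −∞. Set I := [ inf_X φ/ψ , sup_X φ/ψ ] ∩ ℝ. Suppose that for each λ in a dense subset of I the function x ↦ e^{λ}(φ(x) + (1 − λ)ψ(x)) + ω(x) is inf-connected, and that there exists a (possibly different) topology τ₁ on X such that for each λ ∈ I the function x ↦ e^{λ}(φ(x) + (1 − λ)ψ(x)) + ω(x) is τ₁-lower semicontinuous and for some λ₀ ∈ I this function is τ₁-inf-compact. Then there exists x̃ ∈ X such that φ'(x̃) + (1 − φ(x̃)/ψ(x̃))·ψ'(x̃) + e^{−φ(x̃)/ψ(x̃)}·ω'(x̃) = 0 in E*. -/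
/-!
Put `f_l x := exp l * (φ x + (1 - l) * ψ x) + ω x` and `h x := exp (φ x / ψ x) * ψ x + ω x`.
By convexity of `exp`, `f_l ≤ h` with equality at `l = φ x / ψ x ∈ I`, so `h` is the upper
envelope of the τ₁-lower semicontinuous family `(f_l)_{l ∈ I}`. Hence `h` is τ₁-lower
semicontinuous and its sublevel sets are closed in the compact sublevel sets of `f_{l₀}`,
so `h` attains its minimum on the open set `X`. At the minimiser the Gateaux derivative
`exp (φ/ψ) • (φ' + (1 - φ/ψ) • ψ') + ω'` of `h` vanishes; multiply by `exp (-(φ/ψ))`.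
-/

open Set Filter Topology Real

section Semicontinuity

variable {Y β : Type*} [TopologicalSpace Y] [LinearOrder β]

theorem LowerSemicontinuous.of_isGreatest_range {ι : Sort*} {f : Y → β} {g : ι → Y → β}
    (hg : ∀ i, LowerSemicontinuous (g i)) (hf : ∀ y, IsGreatest (range fun i => g i y) (f y)) :
    LowerSemicontinuous f := by
  intro y c hc
  obtain ⟨i, hi : g i y = f y⟩ := (hf y).1
  filter_upwards [hg i y c (show c < g i y from hi ▸ hc)] with z hz
  exact hz.trans_le ((hf z).2 ⟨i, rfl⟩)

theorem LowerSemicontinuous.exists_forall_le_of_le [Nonempty Y] {f g : Y → β}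
    (hf : LowerSemicontinuous f) (hgf : ∀ y, g y ≤ f y) (hg : ∀ r, IsCompact {y | g y ≤ r}) :
    ∃ y₀, ∀ y, f y₀ ≤ f y := by
  obtain ⟨y₁⟩ := ‹Nonempty Y›
  have hK : IsCompact {y | f y ≤ f y₁} :=
    (hg (f y₁)).of_isClosed_subset (hf.isClosed_preimage (f y₁)) fun y hy => (hgf y).trans hy
  have hne : {y | f y ≤ f y₁}.Nonempty := ⟨y₁, le_rfl⟩
  obtain ⟨y₀, -, hmin⟩ := (hf.lowerSemicontinuousOn _).exists_isMinOn hne hK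
  refine ⟨y₀, fun y => ?_⟩
  rcases le_total (f y) (f y₁) with hy | hy
  · exact hmin hy
  · exact (hmin (le_refl (f y₁))).trans hy

end Semicontinuity

theorem exp_mul_add_one_sub_mul_le {p q : ℝ} (hq : 0 < q) (l : ℝ) :
    exp l * (p + (1 - l) * q) ≤ exp (p / q) * q := by
  calc exp l * (p + (1 - l) * q) = exp l * (p / q - l + 1) * q := by field_simp; ring
    _ ≤ exp l * exp (p / q - l) * q := by
        gcongr; exact add_one_le_exp _
    _ = exp (p / q) * q := by rw [← exp_add, add_sub_cancel]

theorem exp_div_mul_add_one_sub_div_mul {p q : ℝ} (hq : q ≠ 0) :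
    exp (p / q) * (p + (1 - p / q) * q) = exp (p / q) * q := by
  field_simp; ring

section Gateaux

variable {E : Type*} [NormedAddCommGroup E] [NormedSpace ℝ E]

def HasGateauxDerivAt (f : E → ℝ) (f' : E →L[ℝ] ℝ) (x : E) : Prop :=
  ∀ v : E, Tendsto (fun t : ℝ => (f (x + t • v) - f x) / t) (𝓝[≠] 0) (𝓝 (f' v))

theorem hasGateauxDerivAt_iff {f : E → ℝ} {f' : E →L[ℝ] ℝ} {x : E} :
    HasGateauxDerivAt f f' x ↔ ∀ v, HasDerivAt (fun t : ℝ => f (x + t • v)) (f' v) 0 := by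
  simp only [HasGateauxDerivAt, hasDerivAt_iff_tendsto_slope_zero, zero_add, zero_smul, add_zero,
    smul_eq_mul, inv_mul_eq_div]

theorem HasGateauxDerivAt.eq_zero_of_isLocalMin {f : E → ℝ} {f' : E →L[ℝ] ℝ} {x : E}
    (hf : HasGateauxDerivAt f f' x) (hmin : IsLocalMin f x) : f' = 0 := by
  ext v
  have hline : IsLocalMin (fun t : ℝ => f (x + t • v)) 0 :=
    (show IsLocalMin f (x + (0 : ℝ) • v) by simpa using hmin).comp_continuous
      (g := fun t : ℝ => x + t • v) (b := 0) (by fun_prop)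
  exact hline.hasDerivAt_eq_zero (hasGateauxDerivAt_iff.1 hf v)

theorem HasGateauxDerivAt.exp_div_mul_add {φ ψ ω : E → ℝ} {φ' ψ' ω' : E →L[ℝ] ℝ} {x : E}
    (hφ : HasGateauxDerivAt φ φ' x) (hψ : HasGateauxDerivAt ψ ψ' x)
    (hω : HasGateauxDerivAt ω ω' x) (hψx : ψ x ≠ 0) :
    HasGateauxDerivAt (fun y => exp (φ y / ψ y) * ψ y + ω y)
      (exp (φ x / ψ x) • (φ' + (1 - φ x / ψ x) • ψ') + ω') x := by
  rw [hasGateauxDerivAt_iff] at *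
  intro v
  have hψx' : ψ (x + (0 : ℝ) • v) ≠ 0 := by simpa using hψx
  refine ((((hφ v).div (hψ v) hψx').exp.mul (hψ v)).add (hω v)).congr_deriv ?_
  simp only [zero_smul, add_zero, add_apply, smul_apply, smul_eq_mul, Pi.div_apply]
  field_simp
  ring

end Gateaux

theorem stmt13_general
    {E : Type*} [NormedAddCommGroup E] [NormedSpace ℝ E]
    (X : Set E) (hXne : X.Nonempty) (hXo : IsOpen X)
    (φ ψ ω : E → ℝ) (φ' ψ' ω' : E → (E →L[ℝ] ℝ))
    (hφ' : ∀ x ∈ X, ∀ v : E, Tendsto (fun t : ℝ => (φ (x + t • v) - φ x) / t)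
      (nhdsWithin 0 {0}ᶜ) (nhds (φ' x v)))
    (hψ' : ∀ x ∈ X, ∀ v : E, Tendsto (fun t : ℝ => (ψ (x + t • v) - ψ x) / t)
      (nhdsWithin 0 {0}ᶜ) (nhds (ψ' x v)))
    (hω' : ∀ x ∈ X, ∀ v : E, Tendsto (fun t : ℝ => (ω (x + t • v) - ω x) / t)
      (nhdsWithin 0 {0}ᶜ) (nhds (ω' x v)))
    (hψ0 : ∀ x ∈ X, 0 < ψ x)
    (I : Set ℝ)
    (hIdef : I = {l : ℝ |
      (⨅ x ∈ X, ((φ x / ψ x : ℝ) : EReal)) ≤ (l : EReal) ∧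
      (l : EReal) ≤ ⨆ x ∈ X, ((φ x / ψ x : ℝ) : EReal)})
    (τ₁ : TopologicalSpace X)
    (hlsc : ∀ l ∈ I, @LowerSemicontinuous X ℝ τ₁ _
      (fun x : X => Real.exp l * (φ x + (1 - l) * ψ x) + ω x))
    (hinfcpt : ∃ l₀ ∈ I, ∀ r : ℝ,
      @IsCompact X τ₁
        {x : X | Real.exp l₀ * (φ (x : E) + (1 - l₀) * ψ (x : E)) + ω (x : E) ≤ r}) :
    ∃ xt ∈ X,
      φ' xt + (1 - φ xt / ψ xt) • ψ' xt + Real.exp (-(φ xt / ψ xt)) • ω' xt = 0 := by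
  obtain ⟨l₀, -, hcpt⟩ := hinfcpt
  set h : E → ℝ := fun x => exp (φ x / ψ x) * ψ x + ω x
  have hratio : ∀ x ∈ X, φ x / ψ x ∈ I := fun x hx => hIdef ▸
    ⟨iInf₂_le x hx, le_iSup₂ (f := fun x _ => ((φ x / ψ x : ℝ) : EReal)) x hx⟩
  have hlsch : @LowerSemicontinuous X ℝ τ₁ _ fun y => h y :=
    @LowerSemicontinuous.of_isGreatest_range X ℝ τ₁ _ I _ _ (fun l => hlsc l l.2) fun y =>
      ⟨⟨⟨_, hratio y y.2⟩, congrArg (· + ω y) (exp_div_mul_add_one_sub_div_mul (hψ0 y y.2).ne')⟩,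
        by rintro _ ⟨l, rfl⟩; exact add_le_add_left (exp_mul_add_one_sub_mul_le (hψ0 y y.2) l) _⟩
  have : Nonempty X := hXne.to_subtype
  obtain ⟨x, hmin⟩ := @LowerSemicontinuous.exists_forall_le_of_le X ℝ τ₁ _ _ _ _ hlsch
    (fun y => add_le_add_left (exp_mul_add_one_sub_mul_le (hψ0 y y.2) l₀) _) hcpt
  have hlocal : IsLocalMin h x :=
    IsMinOn.isLocalMin (fun y hy => hmin ⟨y, hy⟩) (hXo.mem_nhds x.2)
  have hcrit := (HasGateauxDerivAt.exp_div_mul_add (hφ' x x.2) (hψ' x x.2) (hω' x x.2)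
    (hψ0 x x.2).ne').eq_zero_of_isLocalMin hlocal
  refine ⟨x, x.2, ?_⟩
  calc φ' x + (1 - φ x / ψ x) • ψ' x + exp (-(φ x / ψ x)) • ω' x
      = exp (-(φ x / ψ x)) • (exp (φ x / ψ x) • (φ' x + (1 - φ x / ψ x) • ψ' x) + ω' x) := by
        rw [smul_add, smul_smul, ← exp_add, neg_add_cancel, exp_zero, one_smul]
    _ = 0 := by rw [hcrit, smul_zero]

/-- Corollary 3.4: under the assumptions of Theorem 3.5, with X an open subset
of a real normed space and φ, ψ, ω Gateaux differentiable, there exists x̃ ∈ X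
with φ'(x̃) + (1 - φ(x̃)/ψ(x̃))ψ'(x̃) + e^{-φ(x̃)/ψ(x̃)}ω'(x̃) = 0. -/
theorem stmt13
    {E : Type*} [NormedAddCommGroup E] [NormedSpace ℝ E]
    (X : Set E) (hXne : X.Nonempty) (hXo : IsOpen X)
    (φ ψ ω : E → ℝ) (φ' ψ' ω' : E → (E →L[ℝ] ℝ))
    (hφ : ContinuousOn φ X) (hψ : ContinuousOn ψ X) (hω : ContinuousOn ω X)
    (hφ' : ∀ x ∈ X, ∀ v : E, Tendsto (fun t : ℝ => (φ (x + t • v) - φ x) / t)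
      (nhdsWithin 0 {0}ᶜ) (nhds (φ' x v)))
    (hψ' : ∀ x ∈ X, ∀ v : E, Tendsto (fun t : ℝ => (ψ (x + t • v) - ψ x) / t)
      (nhdsWithin 0 {0}ᶜ) (nhds (ψ' x v)))
    (hω' : ∀ x ∈ X, ∀ v : E, Tendsto (fun t : ℝ => (ω (x + t • v) - ω x) / t)
      (nhdsWithin 0 {0}ᶜ) (nhds (ω' x v)))
    (hψ0 : ∀ x ∈ X, 0 < ψ x)
    (hbd : (⊥ : EReal) < ⨅ x ∈ X, ((φ x / ψ x : ℝ) : EReal))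
    (I : Set ℝ)
    (hIdef : I = {l : ℝ |
      (⨅ x ∈ X, ((φ x / ψ x : ℝ) : EReal)) ≤ (l : EReal) ∧
      (l : EReal) ≤ ⨆ x ∈ X, ((φ x / ψ x : ℝ) : EReal)})
    (D : Set ℝ) (hD : D ⊆ I) (hDdense : I ⊆ closure D)
    (hconn : ∀ l ∈ D, ∀ r : ℝ,
      IsPreconnected
        {x : E | x ∈ X ∧ Real.exp l * (φ x + (1 - l) * ψ x) + ω x < r})
    (τ₁ : TopologicalSpace X)
    (hlsc : ∀ l ∈ I, @LowerSemicontinuous X ℝ τ₁ _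
      (fun x : X => Real.exp l * (φ x + (1 - l) * ψ x) + ω x))
    (hinfcpt : ∃ l₀ ∈ I, ∀ r : ℝ,
      @IsCompact X τ₁
        {x : X | Real.exp l₀ * (φ (x : E) + (1 - l₀) * ψ (x : E)) + ω (x : E) ≤ r}) :
    ∃ xt ∈ X,
      φ' xt + (1 - φ xt / ψ xt) • ψ' xt + Real.exp (-(φ xt / ψ xt)) • ω' xt = 0 :=
  stmt13_general X hXne hXo φ ψ ω φ' ψ' ω' hφ' hψ' hω' hψ0 I hIdef τ₁ hlsc hinfcpt
end

section
/- Let a < b be reals and let α, β : [a,b] → ℝ be continuous functions that are C¹ on (a,b) with α'(λ) ≠ 0 for all λ ∈ (a,b), and such that g := β'/α' is strictly increasing on (a,b). Let p, q ∈ ℝ with q ≠ 0 and suppose α'(λ)·q < 0 for all λ ∈ (a,b). Set γ := inf_{(a,b)} g, δ := sup_{(a,b)} g, and define h : ℝ → [a,b] by h(μ) = g⁻¹(μ) if μ ∈ g((a,b)), h(μ) = a if μ ≤ γ, and h(μ) = b if μ ≥ δ. Then h(−p/q) is the unique global maximum point on [a,b] of the function λ ↦ α(λ)p + β(λ)q;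 that is, α(h(−p/q))p + β(h(−p/q))q > α(λ)p + β(λ)q for every λ ∈ [a,b] with λ ≠ h(−p/q). -/
/-!
Put `μ = -p/q` and `F λ = α λ p + β λ q`. Since `α' q < 0`, the derivative
`F' = α' p + β' q = -(α' q) (μ - β'/α')` is positive where `g < μ` and negative where `g > μ`.
As `g` is strictly increasing, `h μ` separates these two regions: if `μ` is a value of `g` this is
`g (h μ) = μ`; otherwise `F'` never vanishes, so by Darboux's theorem it has constant sign, hence so
does `g - μ` and `h μ` is the corresponding endpoint. So `F` strictly increases up to `h μ` and
strictly decreases after it.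
-/

open Set

lemma mul_add_mul_eq_neg_mul_mul_sub_div {a b p q : ℝ} (h : a * q ≠ 0) :
    a * p + b * q = -(a * q) * (-(p / q) - b / a) := by
  obtain ⟨ha, hq⟩ := mul_ne_zero_iff.mp h
  field_simp
  ring

lemma mul_add_mul_pos_iff_div_lt {a b p q : ℝ} (h : a * q < 0) :
    0 < a * p + b * q ↔ b / a < -(p / q) := by
  rw [mul_add_mul_eq_neg_mul_mul_sub_div h.ne, mul_pos_iff_of_pos_left (neg_pos.2 h), sub_pos]

lemma mul_add_mul_neg_iff_lt_div {a b p q : ℝ} (h : a * q < 0) :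
    a * p + b * q < 0 ↔ -(p / q) < b / a := by
  rw [mul_add_mul_eq_neg_mul_mul_sub_div h.ne, ← smul_eq_mul, smul_neg_iff_of_pos_left (neg_pos.2 h),
    sub_neg]

lemma apply_lt_apply_of_hasDerivAt_pos_of_neg {F F' : ℝ → ℝ} {a b c : ℝ} (hc : c ∈ Icc a b)
    (hF : ContinuousOn F (Icc a b)) (hF' : ∀ x ∈ Ioo a b, HasDerivAt F (F' x) x)
    (hpos : ∀ x ∈ Ioo a c, 0 < F' x) (hneg : ∀ x ∈ Ioo c b, F' x < 0) :
    ∀ x ∈ Icc a b, x ≠ c → F x < F c := by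
  have hmono : StrictMonoOn F (Icc a c) := by
    refine strictMonoOn_of_hasDerivWithinAt_pos (f' := F') (convex_Icc a c)
      (hF.mono (Icc_subset_Icc_right hc.2)) (fun x hx => ?_) (fun x hx => ?_) <;>
      simp only [interior_Icc] at hx ⊢
    · exact (hF' x ⟨hx.1, hx.2.trans_le hc.2⟩).hasDerivWithinAt
    · exact hpos x hx
  have hanti : StrictAntiOn F (Icc c b) := by
    refine strictAntiOn_of_hasDerivWithinAt_neg (f' := F') (convex_Icc c b)
      (hF.mono (Icc_subset_Icc_left hc.1)) (fun x hx => ?_) (fun x hx => ?_) <;>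
      simp only [interior_Icc] at hx ⊢
    · exact (hF' x ⟨hc.1.trans_lt hx.1, hx.2⟩).hasDerivWithinAt
    · exact hneg x hx
  intro x hx hxc
  rcases hxc.lt_or_gt with hlt | hgt
  · exact hmono ⟨hx.1, hlt.le⟩ ⟨hc.1, le_rfl⟩ hlt
  · exact hanti ⟨le_rfl, hc.2⟩ ⟨hgt.le, hx.2⟩ hgt

lemma StrictMonoOn.lt_left_gt_right_of_extendedInv {a b μ : ℝ} {g h : ℝ → ℝ}
    (hg : StrictMonoOn g (Ioo a b))
    (hinv : ∀ μ ∈ g '' Ioo a b, h μ ∈ Ioo a b ∧ g (h μ) = μ)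
    (ha : ∀ μ : ℝ, (∀ l ∈ Ioo a b, μ ≤ g l) → h μ = a)
    (hb : ∀ μ : ℝ, (∀ l ∈ Ioo a b, g l ≤ μ) → h μ = b)
    (hμ : μ ∈ g '' Ioo a b ∨ (∀ x ∈ Ioo a b, μ < g x) ∨ ∀ x ∈ Ioo a b, g x < μ) :
    (∀ x ∈ Ioo a (h μ), g x < μ) ∧ ∀ x ∈ Ioo (h μ) b, μ < g x := by
  rcases hμ with hμ | hgt | hlt
  · obtain ⟨hmem, hgh⟩ := hinv μ hμ
    exact ⟨fun x hx => hgh ▸ hg ⟨hx.1, hx.2.trans hmem.2⟩ hmem hx.2,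
      fun x hx => hgh ▸ hg hmem ⟨hmem.1.trans hx.1, hx.2⟩ hx.1⟩
  · rw [ha μ fun x hx => (hgt x hx).le]
    exact ⟨fun x hx => (lt_asymm hx.1 hx.2).elim, hgt⟩
  · rw [hb μ fun x hx => (hlt x hx).le]
    exact ⟨hlt, fun x hx => (lt_asymm hx.1 hx.2).elim⟩

theorem stmt15_general
    (a b : ℝ)
    (α β α' β' : ℝ → ℝ)
    (hα : ContinuousOn α (Icc a b)) (hβ : ContinuousOn β (Icc a b))
    (hα' : ∀ l ∈ Ioo a b, HasDerivAt α (α' l) l)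
    (hβ' : ∀ l ∈ Ioo a b, HasDerivAt β (β' l) l)
    (g : ℝ → ℝ) (hg : ∀ l ∈ Ioo a b, g l = β' l / α' l)
    (hgmono : StrictMonoOn g (Ioo a b))
    (p q : ℝ)
    (hsign : ∀ l ∈ Ioo a b, α' l * q < 0)
    (h : ℝ → ℝ)
    (hhmem : ∀ μ : ℝ, h μ ∈ Icc a b)
    (hhinv : ∀ μ ∈ g '' Ioo a b, h μ ∈ Ioo a b ∧ g (h μ) = μ)
    (hha : ∀ μ : ℝ, (∀ l ∈ Ioo a b, μ ≤ g l) → h μ = a)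
    (hhb : ∀ μ : ℝ, (∀ l ∈ Ioo a b, g l ≤ μ) → h μ = b) :
    ∀ l ∈ Icc a b, l ≠ h (-(p / q)) →
      α l * p + β l * q < α (h (-(p / q))) * p + β (h (-(p / q))) * q := by
  set μ := -(p / q)
  set F' := fun x => α' x * p + β' x * q
  have hF' : ∀ x ∈ Ioo a b, HasDerivAt (fun x => α x * p + β x * q) (F' x) x := fun x hx =>
    ((hα' x hx).mul_const p).add ((hβ' x hx).mul_const q)
  have hpos_iff : ∀ x ∈ Ioo a b, 0 < F' x ↔ g x < μ := fun x hx => by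
    rw [hg x hx]; exact mul_add_mul_pos_iff_div_lt (hsign x hx)
  have hneg_iff : ∀ x ∈ Ioo a b, F' x < 0 ↔ μ < g x := fun x hx => by
    rw [hg x hx]; exact mul_add_mul_neg_iff_lt_div (hsign x hx)
  have hcases : μ ∈ g '' Ioo a b ∨ (∀ x ∈ Ioo a b, μ < g x) ∨ ∀ x ∈ Ioo a b, g x < μ := by
    by_cases hμ : μ ∈ g '' Ioo a b
    · exact Or.inl hμ
    have hne : ∀ x ∈ Ioo a b, F' x ≠ 0 := fun x hx h0 =>
      hμ ⟨x, hx, le_antisymm (not_lt.1 fun hlt => ((hneg_iff x hx).2 hlt).ne h0)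
        (not_lt.1 fun hlt => ((hpos_iff x hx).2 hlt).ne' h0)⟩
    rcases hasDerivWithinAt_forall_lt_or_forall_gt_of_forall_ne (convex_Ioo a b)
      (fun x hx => (hF' x hx).hasDerivWithinAt) hne with hneg | hpos
    · exact Or.inr (Or.inl fun x hx => (hneg_iff x hx).1 (hneg x hx))
    · exact Or.inr (Or.inr fun x hx => (hpos_iff x hx).1 (hpos x hx))
  obtain ⟨hleft, hright⟩ :=
    hgmono.lt_left_gt_right_of_extendedInv hhinv hha hhb hcases
  have hc := hhmem μ
  exact apply_lt_apply_of_hasDerivAt_pos_of_neg hc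
    ((hα.mul continuousOn_const).add (hβ.mul continuousOn_const)) hF'
    (fun x hx => (hpos_iff x ⟨hx.1, hx.2.trans_le hc.2⟩).2 (hleft x hx))
    (fun x hx => (hneg_iff x ⟨hc.1.trans_lt hx.1, hx.2⟩).2 (hright x hx))

/-- The key step in the proof of Theorem 1.1 (case (i₃)): h(-p/q) is the unique
global maximum point on [a,b] of λ ↦ α(λ)p + β(λ)q. -/
theorem stmt15
    (a b : ℝ) (hab : a < b)
    (α β α' β' : ℝ → ℝ)
    (hα : ContinuousOn α (Icc a b)) (hβ : ContinuousOn β (Icc a b))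
    (hα' : ∀ l ∈ Ioo a b, HasDerivAt α (α' l) l)
    (hβ' : ∀ l ∈ Ioo a b, HasDerivAt β (β' l) l)
    (hα'c : ContinuousOn α' (Ioo a b)) (hβ'c : ContinuousOn β' (Ioo a b))
    (hα'0 : ∀ l ∈ Ioo a b, α' l ≠ 0)
    (g : ℝ → ℝ) (hg : ∀ l ∈ Ioo a b, g l = β' l / α' l)
    (hgmono : StrictMonoOn g (Ioo a b))
    (p q : ℝ) (hq : q ≠ 0)
    (hsign : ∀ l ∈ Ioo a b, α' l * q < 0)
    (h : ℝ → ℝ)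
    (hhmem : ∀ μ : ℝ, h μ ∈ Icc a b)
    (hhinv : ∀ μ ∈ g '' Ioo a b, h μ ∈ Ioo a b ∧ g (h μ) = μ)
    (hha : ∀ μ : ℝ, (∀ l ∈ Ioo a b, μ ≤ g l) → h μ = a)
    (hhb : ∀ μ : ℝ, (∀ l ∈ Ioo a b, g l ≤ μ) → h μ = b) :
    ∀ l ∈ Icc a b, l ≠ h (-(p / q)) →
      α l * p + β l * q < α (h (-(p / q))) * p + β (h (-(p / q))) * q :=
  stmt15_general a b α β α' β' hα hβ hα' hβ' g hg hgmono p q hsign h hhmem hhinv hha hhb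
end
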